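/- arXiv:1104.5265 — 10 statements merged into one kernel-verified Lean document; each statement's English description precedes it below -/
import Mathlib

section
/- A compactum X is an AANR if and only if the following holds: for every compactum Y, every topological embedding θ : X → Y, and every decreasing sequence Y₁ ⊇ Y₂ ⊇ ⋯ of closed subsets of Y with ⋂ₙ Yₙ = θ(X), there exists a sequence of continuous functions rₙ : Yₙ → X such that rₙ(θ(x)) → x uniformly over x ∈ X (uniform convergence with respect to some, equivalently any, compatible metric on X). -/
/-!
A compact `θ(X) ⊆ Y` is the intersection of its closed neighbourhoods
`{y | infDist y θ(X) ≤ 1/(n+1)}`, so these form an admissible sequence `Yₙ`, and an approximate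
retraction defined on one of them is what the AANR condition asks for. Conversely, by compactness
of `Y` an admissible sequence `Yₙ` eventually lies in every open neighbourhood of `θ(X)`, so the
retraction of accuracy `1/(k+1)` is defined on `Yₙ` for all large `n`; a diagonal choice
assembles these into a single sequence. Closeness in `X` and in `θ(X)` agree because an embedding
of a compactum is uniformly continuous in both directions. The universe of the ambient spaces is
immaterial, thanks to the Kuratowski embedding into `ℓ^∞(ℕ)`.
-/

open Topology

universe u v

/-- A compactum `X` (a nonempty compact metrizable space) is an *approximative absolute
neighborhood retract* (AANR) if for every compact metric space `Y`, every topological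
embedding `θ : X → Y`, and every `ε > 0`, there exist `δ > 0` and a continuous map
`r : U_δ → X` (where `U_δ = {y | dist (y, θ(X)) ≤ δ}`) moving the points of `θ(X)`
by at most `ε`, i.e. `d (θ (r (θ x))) (θ x) ≤ ε` for all `x ∈ X` (identifying `X`
with `θ(X)`). -/
def IsAANR (X : Type u) [TopologicalSpace X] : Prop :=
  ∀ (Y : Type v) [MetricSpace Y] [CompactSpace Y] (θ : X → Y),
    IsEmbedding θ →
    ∀ ε > (0 : ℝ), ∃ δ > (0 : ℝ), ∃ r : Y → X,
      ContinuousOn r {y | Metric.infDist y (Set.range θ) ≤ δ} ∧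
      ∀ x : X, dist (θ (r (θ x))) (θ x) ≤ ε

universe w

open Filter Metric Set

theorem exists_isometry_compactSpace (Y : Type w) [MetricSpace Y] [CompactSpace Y] :
    ∃ (Z : Type v) (_ : MetricSpace Z) (_ : CompactSpace Z) (e : Y → Z), Isometry e := by
  let κ := kuratowskiEmbedding Y
  have hκ : Isometry κ := kuratowskiEmbedding.isometry Y
  have : CompactSpace (range κ) := isCompact_iff_compactSpace.mp (isCompact_range hκ.continuous)
  exact ⟨ULift.{v} (range κ), inferInstance, Homeomorph.ulift.symm.compactSpace,
    fun y => ULift.up ⟨κ y, mem_range_self y⟩, .of_dist_eq fun a b => hκ.dist_eq a b⟩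

theorem IsAANR.universe_change {X : Type u} [TopologicalSpace X] (h : IsAANR.{u, v} X) :
    IsAANR.{u, w} X := by
  intro Y _ _ θ hθ ε hε
  obtain ⟨Z, _, _, e, he⟩ := exists_isometry_compactSpace.{v} Y
  obtain ⟨δ, hδ, r, hrc, hrθ⟩ := h Z (e ∘ θ) (he.isEmbedding.comp hθ) ε hε
  refine ⟨δ, hδ, r ∘ e, hrc.comp he.continuous.continuousOn fun y hy => ?_, fun x => ?_⟩
  · simpa [range_comp, infDist_image he] using hy
  · simpa [he.dist_eq] using hrθ x

theorem Topology.IsEmbedding.exists_pos_dist_lt_imp_dist_lt {X Y : Type*} [MetricSpace X]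
    [CompactSpace X] [MetricSpace Y] {θ : X → Y} (hθ : IsEmbedding θ) {ε : ℝ} (hε : 0 < ε) :
    ∃ η > 0, ∀ u v, dist (θ u) (θ v) < η → dist u v < ε := by
  let h := hθ.toHomeomorph
  have : CompactSpace (range θ) := isCompact_iff_compactSpace.mp (isCompact_range hθ.continuous)
  obtain ⟨η, hη, H⟩ := Metric.uniformContinuous_iff.1
    (CompactSpace.uniformContinuous_of_continuous h.symm.continuous) ε hε
  exact ⟨η, hη, fun u v huv => by simpa [h] using H (a := h u) (b := h v) huv⟩

theorem eventually_subset_of_iInter_subset {Y : Type*} [TopologicalSpace Y] [CompactSpace Y]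
    {s : ℕ → Set Y} (hc : ∀ n, IsClosed (s n)) (hs : Antitone s) {U : Set Y} (hU : IsOpen U)
    (h : ⋂ n, s n ⊆ U) : ∀ᶠ n in atTop, s n ⊆ U := by
  obtain ⟨N, hN⟩ := exists_subset_nhds_of_isCompact' hs.directed_ge (fun n => (hc n).isCompact) hc
    fun y hy => hU.mem_nhds (h hy)
  exact eventually_atTop.2 ⟨N, fun n hn => (hs hn).trans hN⟩

theorem iInter_infDist_le_one_div_eq_closure {Y : Type*} [PseudoMetricSpace Y] {s : Set Y}
    (hs : s.Nonempty) : ⋂ n : ℕ, {y | infDist y s ≤ 1 / ((n : ℝ) + 1)} = closure s := by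
  ext y
  simp only [mem_iInter, mem_ofPred_eq, mem_closure_iff_infDist_zero hs]
  refine ⟨fun h => le_antisymm ?_ infDist_nonneg, fun h n => h ▸ Nat.one_div_pos_of_nat.le⟩
  exact ge_of_tendsto' tendsto_one_div_add_atTop_nhds_zero_nat h

theorem exists_seq_continuousOn_of_eventually {X Y : Type*} [TopologicalSpace X]
    [TopologicalSpace Y] [Nonempty X] {s : ℕ → Set Y} {ρ : ℕ → Y → X}
    (h : ∀ k, ∀ᶠ n in atTop, ContinuousOn (ρ k) (s n)) :
    ∃ r : ℕ → Y → X, (∀ n, ContinuousOn (r n) (s n)) ∧ ∀ k, ∀ᶠ n in atTop, ∃ j ≥ k, r n = ρ j := by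
  classical
  let ψ n := Nat.findGreatest (fun k => ContinuousOn (ρ k) (s n)) n
  refine ⟨fun n => if ContinuousOn (ρ (ψ n)) (s n) then ρ (ψ n) else fun _ => Classical.ofNonempty,
    fun n => ?_, fun k => ?_⟩
  · dsimp only
    split_ifs with hn
    exacts [hn, continuousOn_const]
  · filter_upwards [h k, eventually_ge_atTop k] with n hkn hk
    have hψ : ContinuousOn (ρ (ψ n)) (s n) := Nat.findGreatest_spec (P := fun k => ContinuousOn (ρ k) (s n)) hk hkn
    exact ⟨ψ n, Nat.le_findGreatest hk hkn, if_pos hψ⟩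

section

variable {X : Type u} [MetricSpace X] [CompactSpace X]

theorem IsAANR.exists_approx_retractions [Nonempty X] (hA : IsAANR.{u, v} X) {Y : Type v}
    [TopologicalSpace Y] [CompactSpace Y] [TopologicalSpace.MetrizableSpace Y] {θ : X → Y}
    (hθ : IsEmbedding θ) {Yn : ℕ → Set Y} (hc : ∀ n, IsClosed (Yn n)) (hYn : Antitone Yn)
    (hYX : (⋂ n, Yn n) = range θ) :
    ∃ r : ℕ → Y → X, (∀ n, ContinuousOn (r n) (Yn n)) ∧
      ∀ ε > (0 : ℝ), ∃ N : ℕ, ∀ n ≥ N, ∀ x : X, dist (r n (θ x)) x ≤ ε := by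
  let : MetricSpace Y := TopologicalSpace.metrizableSpaceMetric Y
  choose δ hδ ρ hρc hρθ using fun k : ℕ => hA Y θ hθ (1 / ((k : ℝ) + 1)) Nat.one_div_pos_of_nat
  have hρYn : ∀ k, ∀ᶠ n in atTop, ContinuousOn (ρ k) (Yn n) := by
    intro k
    have hU : IsOpen {y | infDist y (range θ) < δ k} :=
      isOpen_lt (continuous_infDist_pt _) continuous_const
    have hXU : ⋂ n, Yn n ⊆ {y | infDist y (range θ) < δ k} := by
      rw [hYX]
      rintro _ ⟨x, rfl⟩
      simpa [infDist_zero_of_mem (mem_range_self x)] using hδ k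
    filter_upwards [eventually_subset_of_iInter_subset hc hYn hU hXU] with n hn
    exact (hρc k).mono (hn.trans (ofPred_subset_ofPred.2 fun _ => le_of_lt))
  obtain ⟨r, hrc, hrρ⟩ := exists_seq_continuousOn_of_eventually hρYn
  refine ⟨r, hrc, fun ε hε => ?_⟩
  obtain ⟨η, hη, hθη⟩ := hθ.exists_pos_dist_lt_imp_dist_lt hε
  obtain ⟨K, hK⟩ := exists_nat_one_div_lt hη
  obtain ⟨N, hN⟩ := eventually_atTop.1 (hrρ K)
  refine ⟨N, fun n hn x => ?_⟩
  obtain ⟨j, hjK, hrj⟩ := hN n hn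
  rw [hrj]
  refine (hθη _ _ ?_).le
  calc dist (θ (ρ j (θ x))) (θ x) ≤ 1 / ((j : ℝ) + 1) := hρθ j x
    _ ≤ 1 / ((K : ℝ) + 1) := Nat.one_div_le_one_div hjK
    _ < η := hK

theorem isAANR_of_approx_retractions [Nonempty X]
    (H : ∀ (Y : Type v) [TopologicalSpace Y] [CompactSpace Y]
        [TopologicalSpace.MetrizableSpace Y] [Nonempty Y] (θ : X → Y),
        IsEmbedding θ →
        ∀ Yn : ℕ → Set Y, (∀ n, IsClosed (Yn n)) → (∀ n, Yn (n + 1) ⊆ Yn n) →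
          (⋂ n, Yn n) = Set.range θ →
          ∃ r : ℕ → Y → X,
            (∀ n, ContinuousOn (r n) (Yn n)) ∧
            ∀ ε > (0 : ℝ), ∃ N : ℕ, ∀ n ≥ N, ∀ x : X, dist (r n (θ x)) x ≤ ε) :
    IsAANR.{u, v} X := by
  intro Y _ _ θ hθ ε hε
  have : Nonempty Y := ⟨θ Classical.ofNonempty⟩
  let Yn (n : ℕ) : Set Y := {y | infDist y (range θ) ≤ 1 / ((n : ℝ) + 1)}
  have hc (n : ℕ) : IsClosed (Yn n) := isClosed_le (continuous_infDist_pt _) continuous_const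
  have hYn (n : ℕ) : Yn (n + 1) ⊆ Yn n :=
    ofPred_subset_ofPred.2 fun _ hy => hy.trans (Nat.one_div_le_one_div n.le_succ)
  have hYX : ⋂ n, Yn n = range θ := by
    rw [iInter_infDist_le_one_div_eq_closure (range_nonempty θ),
      (isCompact_range hθ.continuous).isClosed.closure_eq]
  obtain ⟨r, hrc, hrθ⟩ := H Y θ hθ Yn hc hYn hYX
  obtain ⟨η, hη, hθη⟩ := Metric.uniformContinuous_iff.1
    (CompactSpace.uniformContinuous_of_continuous hθ.continuous) ε hε
  obtain ⟨M, hM⟩ := hrθ (η / 2) (half_pos hη)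
  exact ⟨1 / ((M : ℝ) + 1), Nat.one_div_pos_of_nat, r M, hrc M,
    fun x => (hθη ((hM M le_rfl x).trans_lt (half_lt_self hη))).le⟩

end

/-- A compactum `X` is an AANR if and only if: for every compactum `Y`, every topological
embedding `θ : X → Y`, and every decreasing sequence `Y₁ ⊇ Y₂ ⊇ ⋯` of closed subsets of
`Y` with `⋂ n, Yₙ = θ(X)`, there is a sequence of continuous maps `rₙ : Yₙ → X` with
`rₙ (θ x) → x` uniformly over `x ∈ X`.  (Uniform convergence is expressed via a chosen
compatible metric on `X`.) -/
theorem aanr_iff_approximate_retractions_onto_decreasing_closed_sets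
    (X : Type u) [MetricSpace X] [CompactSpace X] [Nonempty X] :
    IsAANR X ↔
      ∀ (Y : Type v) [TopologicalSpace Y] [CompactSpace Y]
        [TopologicalSpace.MetrizableSpace Y] [Nonempty Y] (θ : X → Y),
        IsEmbedding θ →
        ∀ Yn : ℕ → Set Y, (∀ n, IsClosed (Yn n)) → (∀ n, Yn (n + 1) ⊆ Yn n) →
          (⋂ n, Yn n) = Set.range θ →
          ∃ r : ℕ → Y → X,
            (∀ n, ContinuousOn (r n) (Yn n)) ∧
            ∀ ε > (0 : ℝ), ∃ N : ℕ, ∀ n ≥ N, ∀ x : X, dist (r n (θ x)) x ≤ ε := by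
  refine ⟨fun hA Y _ _ _ _ θ hθ Yn hc hYn hYX => ?_, fun H => ?_⟩
  · exact hA.universe_change.exists_approx_retractions hθ hc (antitone_nat_of_succ_le hYn) hYX
  · exact (isAANR_of_approx_retractions H).universe_change
end

section
/- A compactum X is an AANR if and only if the following holds: for every compactum Z, every closed subset Y ⊆ Z, every decreasing sequence Y₁ ⊇ Y₂ ⊇ ⋯ of closed subsets of Z with ⋂ₙ Yₙ = Y, and every continuous function λ : Y → X, there exists a sequence of continuous functions λₙ : Yₙ → X such that λₙ(y) → λ(y) uniformly over y ∈ Y (uniform convergence with respect to some, equivalently any, compatible metric on X). -/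
/-!
Embed everything in the Hilbert cube `Q`, a compact metric space with the Tietze extension
property. If `X ⊆ Q` is an AANR, extend `λ` to a map `F : Z → Q`. Some neighbourhood of `Y` is
sent by `F` into the neighbourhood of `X` on which an `ε`-retraction `r` is defined; by
compactness it contains some `Yₙ`, and `r ∘ F` is `ε`-close to `λ` on `Y`.
Conversely, for `X ⊆ W ⊆ Q` apply the property to the closed `1/(n+1)`-neighbourhoods of `X`
in `W` and to the inverse of the embedding: the maps `λₙ` restricted to `W` are approximate
retractions.
-/

open Topology

universe u v

open Metric Set

universe w

/-- Lifted to an arbitrary universe, since the test spaces in `IsAANR` and in the extension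
property live in prescribed universes. -/
def HilbertCube : Type w := ULift.{w} (ℕ → unitInterval)

namespace HilbertCube

noncomputable instance : MetricSpace HilbertCube.{w} :=
  letI : MetricSpace (ℕ → unitInterval) := PiCountable.metricSpace
  inferInstanceAs (MetricSpace (ULift.{w} (ℕ → unitInterval)))

instance : Nonempty HilbertCube.{w} :=
  inferInstanceAs (Nonempty (ULift.{w} (ℕ → unitInterval)))

instance : CompactSpace HilbertCube.{w} :=
  inferInstanceAs (CompactSpace (ULift.{w} (ℕ → unitInterval)))

instance : TietzeExtension.{u} HilbertCube.{w} :=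
  TietzeExtension.of_homeo (Homeomorph.ulift : ULift.{w} (ℕ → unitInterval) ≃ₜ _)

theorem exists_isEmbedding (X : Type u) [MetricSpace X] [TopologicalSpace.SeparableSpace X] :
    ∃ f : X → HilbertCube.{w}, IsEmbedding f := by
  obtain ⟨f, hf⟩ := Metric.PiNatEmbed.exists_embedding_to_hilbert_cube (X := X)
  exact ⟨fun x => ULift.up (f x), Homeomorph.ulift.symm.isEmbedding.comp hf⟩

end HilbertCube

theorem Topology.IsInducing.continuousOn_invFun {X Y : Type*} [TopologicalSpace X]
    [TopologicalSpace Y] [Nonempty X] {j : X → Y} (hj : IsInducing j) :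
    ContinuousOn (Function.invFun j) (range j) := by
  rw [hj.continuousOn_iff]
  exact continuousOn_id.congr fun _ hy => Function.invFun_eq hy

theorem Topology.IsInducing.uniformContinuousOn_invFun {X Y : Type*} [UniformSpace X]
    [CompactSpace X] [Nonempty X] [UniformSpace Y] {j : X → Y} (hj : IsInducing j) :
    UniformContinuousOn (Function.invFun j) (range j) :=
  (isCompact_range hj.continuous).uniformContinuousOn_of_continuous hj.continuousOn_invFun

theorem ContinuousOn.exists_continuousMap_eqOn {Z : Type u} {Q : Type*} [TopologicalSpace Z]
    [NormalSpace Z] [TopologicalSpace Q] [TietzeExtension.{u} Q] {Y : Set Z} (hY : IsClosed Y)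
    {g : Z → Q} (hg : ContinuousOn g Y) : ∃ G : C(Z, Q), EqOn G g Y := by
  obtain ⟨G, hG⟩ := ContinuousMap.exists_restrict_eq hY ⟨Y.domRestrict g, hg.domRestrict⟩
  exact ⟨G, fun y hy => DFunLike.congr_fun hG ⟨y, hy⟩⟩

theorem Metric.iInter_setOf_infDist_le_one_div {α : Type*} [PseudoMetricSpace α] {s : Set α}
    (hs : s.Nonempty) : ⋂ n : ℕ, {x | infDist x s ≤ 1 / (n + 1)} = closure s := by
  ext x
  simp only [mem_iInter, mem_ofPred_eq, mem_closure_iff_infDist_zero hs]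
  refine ⟨fun h => le_antisymm ?_ infDist_nonneg, fun h n => by rw [h]; positivity⟩
  exact ge_of_tendsto' tendsto_one_div_add_atTop_nhds_zero_nat h

theorem exists_seq_continuousOn_of_forall_approx {Z X : Type*} [TopologicalSpace Z]
    [PseudoMetricSpace X] [Nonempty X] {Y : Set Z} {Yn : ℕ → Set Z} (hYn : Antitone Yn)
    {lam : Z → X}
    (h : ∀ ε > (0 : ℝ), ∃ N, ∃ f : Z → X, ContinuousOn f (Yn N) ∧ ∀ y ∈ Y, dist (f y) (lam y) ≤ ε) :
    ∃ l : ℕ → Z → X, (∀ n, ContinuousOn (l n) (Yn n)) ∧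
      ∀ ε > (0 : ℝ), ∃ N : ℕ, ∀ n ≥ N, ∀ y ∈ Y, dist (l n y) (lam y) ≤ ε := by
  classical
  choose N f hf_cont hf_dist using fun k : ℕ => h (1 / (k + 1)) (by positivity)
  -- at stage `n`, use the finest approximation `f k` with `k ≤ n` that is continuous on `Yn n`
  let K n := Nat.findGreatest (fun k => N k ≤ n) n
  refine ⟨fun n => if N (K n) ≤ n then f (K n) else fun _ => Classical.arbitrary X,
    fun n => ?_, fun ε hε => ?_⟩
  · dsimp only
    split_ifs with hn
    · exact (hf_cont _).mono (hYn hn)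
    · exact continuousOn_const
  · obtain ⟨k, hk⟩ := exists_nat_one_div_lt hε
    refine ⟨max (N k) k, fun n hn y hy => ?_⟩
    obtain ⟨hNk, hkn⟩ := max_le_iff.1 hn
    have hkK : k ≤ K n := Nat.le_findGreatest hkn hNk
    have hK : N (K n) ≤ n := Nat.findGreatest_spec (P := fun k => N k ≤ n) hkn hNk
    simp only [if_pos hK]
    calc dist (f (K n) y) (lam y) ≤ 1 / (K n + 1) := hf_dist _ y hy
      _ ≤ 1 / (k + 1) := by gcongr
      _ ≤ ε := hk.le

theorem IsAANR.exists_nhdsSet_continuousOn_dist_le {X : Type u} [MetricSpace X] [CompactSpace X]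
    [Nonempty X] (hX : IsAANR.{u, w} X) {Z : Type v} [TopologicalSpace Z] [NormalSpace Z]
    {Y : Set Z} (hY : IsClosed Y) {lam : Z → X} (hlam : ContinuousOn lam Y) {ε : ℝ}
    (hε : 0 < ε) :
    ∃ U ∈ 𝓝ˢ Y, ∃ f : Z → X, ContinuousOn f U ∧ ∀ y ∈ Y, dist (f y) (lam y) ≤ ε := by
  obtain ⟨j, hj⟩ := HilbertCube.exists_isEmbedding.{u, w} X
  obtain ⟨ε', hε', hjε⟩ :=
    Metric.uniformContinuousOn_iff_le.1 hj.isInducing.uniformContinuousOn_invFun ε hε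
  obtain ⟨δ, hδ, r, hr, hrj⟩ := hX HilbertCube j hj ε' hε'
  obtain ⟨F, hF⟩ := (hj.continuous.comp_continuousOn hlam).exists_continuousMap_eqOn hY
  have hFY : ∀ y ∈ Y, F y = j (lam y) := fun y hy => hF hy
  set U := F ⁻¹' {q | infDist q (range j) < δ}
  have hU : IsOpen U :=
    (isOpen_lt (continuous_infDist_pt _) continuous_const).preimage F.continuous
  have hYU : Y ⊆ U := fun y hy => by
    simp only [U, mem_preimage, mem_ofPred_eq, hFY y hy, infDist_zero_of_mem (mem_range_self _), hδ]
  have hUδ : MapsTo F U {q | infDist q (range j) ≤ δ} := fun _ hz =>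
    mem_ofPred.2 (mem_ofPred.1 (mem_preimage.1 hz)).le
  refine ⟨U, hU.mem_nhdsSet.2 hYU, r ∘ F, hr.comp F.continuous.continuousOn hUδ, fun y hy => ?_⟩
  have := hjε _ (mem_range_self (r (j (lam y)))) _ (mem_range_self (lam y)) (hrj (lam y))
  simpa only [Function.comp_apply, hFY y hy, Function.leftInverse_invFun hj.injective _] using this

def ApproxExtensionProperty (X : Type u) [PseudoMetricSpace X] (Z : Type v)
    [TopologicalSpace Z] : Prop :=
  ∀ (Y : Set Z), IsClosed Y →
    ∀ Yn : ℕ → Set Z, (∀ n, IsClosed (Yn n)) → (∀ n, Yn (n + 1) ⊆ Yn n) →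
      (⋂ n, Yn n) = Y →
      ∀ lam : Z → X, ContinuousOn lam Y →
        ∃ l : ℕ → Z → X,
          (∀ n, ContinuousOn (l n) (Yn n)) ∧
          ∀ ε > (0 : ℝ), ∃ N : ℕ, ∀ n ≥ N, ∀ y ∈ Y, dist (l n y) (lam y) ≤ ε

theorem IsAANR.approxExtensionProperty {X : Type u} [MetricSpace X] [CompactSpace X] [Nonempty X]
    (hX : IsAANR.{u, w} X) (Z : Type v) [TopologicalSpace Z] [CompactSpace Z]
    [TopologicalSpace.MetrizableSpace Z] : ApproxExtensionProperty X Z := by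
  intro Y hY Yn hYn_closed hYn_succ hYn_inter lam hlam
  have hYn : Antitone Yn := antitone_nat_of_succ_le hYn_succ
  refine exists_seq_continuousOn_of_forall_approx hYn fun ε hε => ?_
  obtain ⟨U, hU, f, hf, hfY⟩ := hX.exists_nhdsSet_continuousOn_dist_le hY hlam hε
  obtain ⟨N, hN⟩ := exists_subset_nhds_of_isCompact hYn.directed_ge
    (fun n => (hYn_closed n).isCompact) fun z hz => mem_nhdsSet_iff_forall.1 hU z (hYn_inter ▸ hz)
  exact ⟨N, f, hf.mono hN, hfY⟩

theorem isAANR_of_approxExtensionProperty {X : Type u} [MetricSpace X] [CompactSpace X]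
    [Nonempty X] (h : ApproxExtensionProperty X HilbertCube.{v}) : IsAANR.{u, w} X := by
  intro W _ _ θ hθ ε hε
  obtain ⟨ι, hι⟩ := HilbertCube.exists_isEmbedding.{w, v} W
  have hιθ : IsEmbedding (ι ∘ θ) := hι.comp hθ
  set T : ℕ → Set W := fun n => {w | infDist w (range θ) ≤ 1 / (n + 1)}
  have hT_closed (n : ℕ) : IsClosed (T n) := isClosed_le (continuous_infDist_pt _) continuous_const
  have hT_succ (n : ℕ) : T (n + 1) ⊆ T n :=
    ofPred_subset_ofPred.2 fun w hw => hw.trans (by gcongr; linarith)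
  have hT_inter : ⋂ n, ι '' T n = range (ι ∘ θ) := by
    rw [← hι.injective.injOn.image_iInter_eq, iInter_setOf_infDist_le_one_div (range_nonempty θ),
      (isCompact_range hθ.continuous).isClosed.closure_eq, range_comp]
  obtain ⟨l, hl_cont, hl_lim⟩ := h _ (isCompact_range hιθ.continuous).isClosed (fun n => ι '' T n)
    (fun n => ((hT_closed n).isCompact.image hι.continuous).isClosed)
    (fun n => image_mono (hT_succ n)) hT_inter _ hιθ.isInducing.continuousOn_invFun
  obtain ⟨ε₁, hε₁, hθε⟩ := Metric.uniformContinuous_iff_le.1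
    (CompactSpace.uniformContinuous_of_continuous hθ.continuous) ε hε
  obtain ⟨N, hN⟩ := hl_lim ε₁ hε₁
  refine ⟨1 / (N + 1), by positivity, l N ∘ ι,
    (hl_cont N).comp hι.continuous.continuousOn (mapsTo_image ι _), fun x => hθε ?_⟩
  have hx := hN N le_rfl _ (mem_range_self x)
  rwa [Function.leftInverse_invFun hιθ.injective x] at hx

/-- A compactum `X` is an AANR if and only if: for every compactum `Z`, every closed subset
`Y ⊆ Z`, every decreasing sequence `Y₁ ⊇ Y₂ ⊇ ⋯` of closed subsets of `Z` with
`⋂ n, Yₙ = Y`, and every continuous `λ : Y → X`, there is a sequence of continuous maps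
`λₙ : Yₙ → X` with `λₙ y → λ y` uniformly over `y ∈ Y` (uniform convergence taken with
respect to a chosen compatible metric on `X`). -/
theorem aanr_iff_approximate_extension_property
    (X : Type u) [MetricSpace X] [CompactSpace X] [Nonempty X] :
    IsAANR X ↔
      ∀ (Z : Type v) [TopologicalSpace Z] [CompactSpace Z]
        [TopologicalSpace.MetrizableSpace Z] [Nonempty Z] (Y : Set Z), IsClosed Y →
        ∀ Yn : ℕ → Set Z, (∀ n, IsClosed (Yn n)) → (∀ n, Yn (n + 1) ⊆ Yn n) →
          (⋂ n, Yn n) = Y →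
          ∀ lam : Z → X, ContinuousOn lam Y →
            ∃ l : ℕ → Z → X,
              (∀ n, ContinuousOn (l n) (Yn n)) ∧
              ∀ ε > (0 : ℝ), ∃ N : ℕ, ∀ n ≥ N, ∀ y ∈ Y, dist (l n y) (lam y) ≤ ε :=
  ⟨fun hX Z _ _ _ _ => hX.approxExtensionProperty Z,
    fun h => isAANR_of_approxExtensionProperty (h HilbertCube)⟩
end

section
/- The topologist's sine curve X = ({0} × [−1,1]) ∪ {(t, sin(1/t)) : t ∈ (0,1]} ⊆ ℝ² is an AANR. -/
open Topology

universe u v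

/-- The topologist's sine curve
`({0} × [−1,1]) ∪ {(t, sin(1/t)) : t ∈ (0,1]} ⊆ ℝ²`. -/
noncomputable def sineCurve : Set (ℝ × ℝ) :=
  {p : ℝ × ℝ | p.1 = 0 ∧ p.2 ∈ Set.Icc (-1 : ℝ) 1} ∪
    {p : ℝ × ℝ | ∃ t : ℝ, 0 < t ∧ t ≤ 1 ∧ p = (t, Real.sin (1 / t))}

/-! A compactum `X` is an AANR as soon as, for every `η > 0`, there are continuous maps
`f : X → ℝ` and `g : ℝ → X` with `g ∘ f` uniformly `η`-close to the identity: extend `f` (Tietze)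
over a compact metric space containing `X`, and compose with `g`. For the sine curve, `g` runs
along the graph over `[a, 1]` and `f` sends `(x, y)` to `max x τ(y)`, where `τ(y) ≤ 1/n` is a
parameter at which the graph has height `y`: the graph point over `max x τ(y)` has height `y` and
lies at most `τ(y)` to the right of `(x, y)`. -/

open Set Real

theorem isAANR_of_forall_exists_dist_comp_lt {X : Type u} [MetricSpace X] [CompactSpace X]
    {Z : Type*} [TopologicalSpace Z] [TietzeExtension.{v} Z]
    (h : ∀ η > (0 : ℝ), ∃ (f : C(X, Z)) (g : C(Z, X)), ∀ x, dist (g (f x)) x < η) :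
    IsAANR.{u, v} X := by
  intro Y _ _ θ hθ ε hε
  obtain ⟨η, hη, hθη⟩ := Metric.uniformContinuous_iff.mp
    (CompactSpace.uniformContinuous_of_continuous hθ.continuous) ε hε
  obtain ⟨f, g, hgf⟩ := h η hη
  obtain ⟨F, hF⟩ := f.exists_extension' (hθ.continuous.isClosedEmbedding hθ.injective)
  refine ⟨1, one_pos, g ∘ F, (g.continuous.comp F.continuous).continuousOn, fun x => ?_⟩
  have hFθ : F (θ x) = f x := congrFun hF x
  simpa only [Function.comp_apply, hFθ] using (hθη (hgf x)).le

theorem sineCurve_eq :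
    sineCurve = Icc (0 : ℝ) 1 ×ˢ Icc (-1 : ℝ) 1 ∩ {p | 0 < p.1 → p.2 = sin (1 / p.1)} := by
  ext ⟨x, y⟩
  constructor
  · rintro (⟨rfl, hy⟩ | ⟨t, ht0, ht1, h⟩)
    · exact ⟨⟨⟨le_rfl, zero_le_one⟩, hy⟩, fun h => (lt_irrefl _ h).elim⟩
    · obtain ⟨rfl, rfl⟩ := Prod.mk.inj h
      exact ⟨⟨⟨ht0.le, ht1⟩, neg_one_le_sin _, sin_le_one _⟩, fun _ => rfl⟩
  · rintro ⟨⟨⟨hx0, hx1⟩, hy⟩, hgraph⟩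
    rcases hx0.eq_or_lt with rfl | hx
    · exact Or.inl ⟨rfl, hy⟩
    · exact Or.inr ⟨x, hx, hx1, Prod.ext rfl (hgraph hx)⟩

theorem isCompact_sineCurve : IsCompact sineCurve := by
  rw [sineCurve_eq]
  refine (isCompact_Icc.prod isCompact_Icc).inter_right ?_
  have hopen : IsOpen ({p : ℝ × ℝ | 0 < p.1} ∩ (fun p => p.2 - sin (1 / p.1)) ⁻¹' {0}ᶜ) := by
    refine ContinuousOn.isOpen_inter_preimage ?_ (isOpen_lt continuous_const continuous_fst)
      isOpen_compl_singleton
    exact continuousOn_snd.sub (continuous_sin.comp_continuousOn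
      (continuousOn_const.div continuousOn_fst fun p hp => ne_of_gt hp))
  convert hopen.isClosed_compl using 1
  ext p
  simp [sub_eq_zero]

instance : CompactSpace sineCurve := isCompact_iff_compactSpace.mp isCompact_sineCurve

theorem dist_sineCurve_max_le {p : ℝ × ℝ} (hp : p ∈ sineCurve) {τ : ℝ} (hτ : 0 < τ)
    (hsin : sin (1 / τ) = p.2) : dist (max p.1 τ, sin (1 / max p.1 τ)) p ≤ τ := by
  have hp0 : 0 ≤ p.1 := (sineCurve_eq ▸ hp).1.1.1
  have hheight : sin (1 / max p.1 τ) = p.2 := by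
    rcases le_total p.1 τ with h | h
    · rwa [max_eq_right h]
    · rw [max_eq_left h]
      exact ((sineCurve_eq ▸ hp).2 (hτ.trans_le h)).symm
  rw [Prod.dist_eq, hheight, dist_self, Real.dist_eq,
    abs_of_nonneg (sub_nonneg.mpr (le_max_left _ _))]
  exact max_le (by linarith [max_le_add_of_nonneg hp0 hτ.le]) hτ.le

noncomputable def sineCurveArc {a : ℝ} (ha : 0 < a) (ha1 : a ≤ 1) : C(ℝ, sineCurve) where
  toFun s := ⟨(projIcc a 1 ha1 s, sin (1 / projIcc a 1 ha1 s)),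
    Or.inr ⟨_, ha.trans_le (projIcc a 1 ha1 s).2.1, (projIcc a 1 ha1 s).2.2, rfl⟩⟩
  continuous_toFun := by
    have hpos : ∀ s, (projIcc a 1 ha1 s : ℝ) ≠ 0 := fun s =>
      (ha.trans_le (projIcc a 1 ha1 s).2.1).ne'
    have hcont : Continuous fun s => (projIcc a 1 ha1 s : ℝ) :=
      continuous_subtype_val.comp continuous_projIcc
    exact (hcont.prodMk (continuous_sin.comp (continuous_const.div hcont hpos))).subtype_mk _

noncomputable def sineCurveParamOfHeight (n : ℕ) (y : ℝ) : ℝ := (arcsin y + n * (2 * π))⁻¹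

section sineCurveParamOfHeight

variable {n : ℕ} {y : ℝ}

theorem sin_one_div_sineCurveParamOfHeight (hy : y ∈ Icc (-1 : ℝ) 1) :
    sin (1 / sineCurveParamOfHeight n y) = y := by
  rw [sineCurveParamOfHeight, one_div, inv_inv, sin_add_nat_mul_two_pi, sin_arcsin hy.1 hy.2]

theorem arcsin_add_nat_mul_two_pi_pos (hn : 1 ≤ n) : 0 < arcsin y + n * (2 * π) := by
  have : (1 : ℝ) ≤ n := by exact_mod_cast hn
  nlinarith [neg_pi_div_two_le_arcsin y, pi_pos]

theorem sineCurveParamOfHeight_mem_Icc (hn : 1 ≤ n) :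
    sineCurveParamOfHeight n y ∈ Icc (n * (2 * π) + 2)⁻¹ (n : ℝ)⁻¹ := by
  have : (1 : ℝ) ≤ n := by exact_mod_cast hn
  constructor
  · exact inv_anti₀ (arcsin_add_nat_mul_two_pi_pos hn)
      (by linarith [arcsin_le_pi_div_two y, pi_lt_four])
  · exact inv_anti₀ (by positivity) (by nlinarith [neg_pi_div_two_le_arcsin y, pi_gt_three])

theorem continuous_sineCurveParamOfHeight (hn : 1 ≤ n) : Continuous (sineCurveParamOfHeight n) :=
  (continuous_arcsin.add continuous_const).inv₀ fun _ => (arcsin_add_nat_mul_two_pi_pos hn).ne'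

end sineCurveParamOfHeight

theorem sineCurve_exists_dist_comp_lt {η : ℝ} (hη : 0 < η) :
    ∃ (f : C(sineCurve, ℝ)) (g : C(ℝ, sineCurve)), ∀ x, dist (g (f x)) x < η := by
  obtain ⟨m, hm⟩ := exists_nat_one_div_lt hη
  set n := m + 1
  have hn : 1 ≤ n := Nat.le_add_left 1 m
  have hn' : (1 : ℝ) ≤ n := by exact_mod_cast hn
  set τ := sineCurveParamOfHeight n
  have hτ : ∀ y, τ y ∈ Icc (n * (2 * π) + 2)⁻¹ (n : ℝ)⁻¹ := fun y =>
    sineCurveParamOfHeight_mem_Icc hn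
  have ha : 0 < (n * (2 * π) + 2)⁻¹ := by positivity
  have ha1 : (n * (2 * π) + 2)⁻¹ ≤ 1 := inv_le_one_of_one_le₀ (by nlinarith [pi_pos])
  let f : C(sineCurve, ℝ) :=
    ⟨fun x => max x.1.1 (τ x.1.2), continuous_induced_dom.fst.max
      ((continuous_sineCurveParamOfHeight hn).comp continuous_induced_dom.snd)⟩
  refine ⟨f, sineCurveArc ha ha1, fun ⟨p, hp⟩ => ?_⟩
  have hbox := (sineCurve_eq ▸ hp).1
  have hfp : max p.1 (τ p.2) ∈ Icc (n * (2 * π) + 2)⁻¹ 1 :=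
    ⟨(hτ p.2).1.trans (le_max_right _ _),
      max_le hbox.1.2 ((hτ p.2).2.trans (inv_le_one_of_one_le₀ hn'))⟩
  have hτpos : 0 < τ p.2 := ha.trans_le (hτ p.2).1
  calc dist (sineCurveArc ha ha1 (f ⟨p, hp⟩)) ⟨p, hp⟩
      = dist (max p.1 (τ p.2), sin (1 / max p.1 (τ p.2))) p := by
        rw [Subtype.dist_eq]
        simp only [sineCurveArc, f, ContinuousMap.coe_mk, projIcc_of_mem _ hfp]
    _ ≤ τ p.2 := dist_sineCurve_max_le hp hτpos (sin_one_div_sineCurveParamOfHeight hbox.2)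
    _ ≤ 1 / (m + 1) := by simpa [n] using (hτ p.2).2
    _ < η := hm

/-- The topologist's sine curve is an AANR. -/
theorem sineCurve_isAANR : IsAANR ↥sineCurve :=
  isAANR_of_forall_exists_dist_comp_lt fun _ => sineCurve_exists_dist_comp_lt
end

section
/- The double topologist's sine curve X = ({0} × [−1,1]) ∪ {(t, sin(1/t)) : t ∈ [−1,1], t ≠ 0} ⊆ ℝ², obtained by attaching two copies of the topologist's sine curve along the limit segment, is not an AANR. -/
open Topology

universe u v

/-- The double topologist's sine curve
`({0} × [−1,1]) ∪ {(t, sin(1/t)) : t ∈ [−1,1], t ≠ 0} ⊆ ℝ²`, i.e. two copies of the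
topologist's sine curve attached along the limit segment. -/
noncomputable def doubleSineCurve : Set (ℝ × ℝ) :=
  {p : ℝ × ℝ | p.1 = 0 ∧ p.2 ∈ Set.Icc (-1 : ℝ) 1} ∪
    {p : ℝ × ℝ | ∃ t : ℝ, t ∈ Set.Icc (-1 : ℝ) 1 ∧ t ≠ 0 ∧ p = (t, Real.sin (1 / t))}

/-! The right half of the curve accumulates on the whole segment `{0} × [-1, 1]`, so a path in
the curve along which `x > 0` can never reach the segment: just before it would, it passes through
points `(t, sin (1 / t))` at height `±1`, far from its limit. Hence no path in the curve joins
`x = 1` to `x = -1`. But for every `δ > 0` such a path exists in the `δ`-neighbourhood of the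
curve (follow the curve until `|x| = δ`, then cross the segment along a straight line), and an
approximate retraction of that neighbourhood onto the curve would turn it into one inside the
curve. -/

open Real Set Metric

theorem IsAANR.exists_continuous_push {M : Type u} [MetricSpace M] {K S : Set M}
    (hK : IsCompact K) (hSK : S ⊆ K) (h : IsAANR.{u, max u v} S) {ε : ℝ} (hε : 0 < ε) :
    ∃ δ > 0, ∀ {Z : Type*} [TopologicalSpace Z] (σ : Z → M), Continuous σ → (∀ z, σ z ∈ K) →
      (∀ z, ∃ x ∈ S, dist (σ z) x ≤ δ) →
      ∃ ρ : Z → M, Continuous ρ ∧ (∀ z, ρ z ∈ S) ∧ ∀ z, σ z ∈ S → dist (ρ z) (σ z) ≤ ε := by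
  have : CompactSpace K := isCompact_iff_compactSpace.mp hK
  let θ : S → ULift.{v} K := fun x => ULift.up ⟨x, hSK x.2⟩
  have hθ : Isometry θ := Isometry.of_dist_eq fun _ _ => rfl
  obtain ⟨δ, hδ, r, hr, hrθ⟩ := h _ θ hθ.isEmbedding ε hε
  refine ⟨δ, hδ, fun σ hσ hσK hσS => ?_⟩
  let σ' : _ → ULift.{v} K := fun z => ULift.up ⟨σ z, hσK z⟩
  have hσ'U : ∀ z, σ' z ∈ {y | infDist y (range θ) ≤ δ} := fun z => by
    obtain ⟨x, hx, hdist⟩ := hσS z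
    exact (infDist_le_dist_of_mem (mem_range_self (⟨x, hx⟩ : S))).trans hdist
  refine ⟨fun z => r (σ' z), continuous_subtype_val.comp
    (hr.comp_continuous (continuous_uliftUp.comp (hσ.subtype_mk _)) hσ'U),
    fun z => (r (σ' z)).2, fun z hz => hrθ ⟨σ z, hz⟩⟩

theorem mk_zero_mem_doubleSineCurve {y : ℝ} (hy : |y| ≤ 1) : ((0 : ℝ), y) ∈ doubleSineCurve :=
  Or.inl ⟨rfl, abs_le.mp hy⟩

theorem mk_sin_one_div_mem_doubleSineCurve {t : ℝ} (ht : |t| ≤ 1) (h0 : t ≠ 0) :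
    (t, sin (1 / t)) ∈ doubleSineCurve :=
  Or.inr ⟨t, abs_le.mp ht, h0, rfl⟩

theorem snd_eq_of_mem_doubleSineCurve {p : ℝ × ℝ} (hp : p ∈ doubleSineCurve) (h : p.1 ≠ 0) :
    p.2 = sin (1 / p.1) := by
  rcases hp with ⟨h0, _⟩ | ⟨t, _, _, rfl⟩
  · exact absurd h0 h
  · rfl

theorem doubleSineCurve_subset_closedBall : doubleSineCurve ⊆ closedBall 0 1 := by
  rintro p (⟨h0, h1⟩ | ⟨t, ht, -, rfl⟩)
  · simpa [Prod.norm_def, h0] using abs_le.mpr h1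
  · simpa [Prod.norm_def] using ⟨abs_le.mpr ht, abs_sin_le_one _⟩

theorem exists_mem_Ioc_sin_one_div_eq {τ y : ℝ} (hτ : 0 < τ) (hy : y ∈ Icc (-1) 1) :
    ∃ t ∈ Ioc 0 τ, sin (1 / t) = y := by
  obtain ⟨n, hn⟩ := exists_nat_gt (1 / τ + 2)
  set w := arcsin y + n * (2 * π)
  have hw : 1 / τ < w := by
    have : (n : ℝ) * 6 ≤ n * (2 * π) := by gcongr; linarith [pi_gt_three]
    linarith [neg_pi_div_two_le_arcsin y, pi_le_four]
  have hw0 : 0 < w := (one_div_pos.mpr hτ).trans hw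
  refine ⟨1 / w, ⟨one_div_pos.mpr hw0, (one_div_le hw0 hτ).mpr hw.le⟩, ?_⟩
  rw [one_div_one_div, sin_add_nat_mul_two_pi, sin_arcsin hy.1 hy.2]

theorem isClosed_setOf_fst_pos {γ : ℝ → ℝ × ℝ} (hγ : Continuous γ)
    (hgraph : ∀ s, 0 < (γ s).1 → (γ s).2 = sin (1 / (γ s).1)) :
    IsClosed {s | 0 < (γ s).1} := by
  have hf : Continuous fun s => (γ s).1 := continuous_fst.comp hγ
  refine isClosed_of_closure_subset fun s hs => ?_
  have hs₀ : 0 ≤ (γ s).1 := closure_lt_subset_le continuous_const hf hs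
  refine hs₀.lt_of_ne fun hzero => ?_
  obtain ⟨η, hη, hcont⟩ := Metric.continuous_iff.mp hγ s 1 one_pos
  obtain ⟨u, hu, hsu⟩ := Metric.mem_closure_iff.mp hs η hη
  obtain ⟨y, hy, hfar⟩ : ∃ y ∈ Icc (-1 : ℝ) 1, 1 ≤ |y - (γ s).2| := by
    rcases le_or_gt (γ s).2 0 with h | h
    · exact ⟨1, by norm_num, by rw [abs_of_nonneg] <;> linarith⟩
    · exact ⟨-1, by norm_num, by rw [abs_of_neg] <;> linarith⟩
  obtain ⟨t, ⟨ht, htu⟩, hty⟩ := exists_mem_Ioc_sin_one_div_eq hu hy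
  obtain ⟨v, hv, hvt⟩ := intermediate_value_uIcc hf.continuousOn
    (mem_uIcc.mpr (Or.inr ⟨hzero ▸ ht.le, htu⟩) : t ∈ uIcc (γ u).1 (γ s).1)
  have hvs : dist v s < η := by
    rw [dist_comm, Real.dist_eq]
    exact (abs_sub_right_of_mem_uIcc hv).trans_lt (Real.dist_eq s u ▸ hsu)
  have hγv : (γ v).2 = y := by
    simp only at hvt
    rw [hgraph v (hvt ▸ ht), hvt, hty]
  have hnear : dist (γ v).2 (γ s).2 < 1 := (le_max_right _ _).trans_lt (hcont v hvs)
  rw [hγv, Real.dist_eq] at hnear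
  linarith

theorem fst_pos_of_mem_doubleSineCurve {γ : ℝ → ℝ × ℝ} (hγ : Continuous γ)
    (hX : ∀ s, γ s ∈ doubleSineCurve) {a : ℝ} (ha : 0 < (γ a).1) (b : ℝ) : 0 < (γ b).1 := by
  have hclopen : IsClopen {s | 0 < (γ s).1} :=
    ⟨isClosed_setOf_fst_pos hγ fun s hs => snd_eq_of_mem_doubleSineCurve (hX s) hs.ne',
      isOpen_lt continuous_const (continuous_fst.comp hγ)⟩
  exact eq_univ_iff_forall.mp (hclopen.eq_univ ⟨a, ha⟩) b

/-- Agrees with `sin (1 / x)` for `t₀ ≤ |x|` and is linear on `[-t₀, t₀]`. -/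
noncomputable def sinOneDivBridge (t₀ x : ℝ) : ℝ :=
  x / max t₀ |x| * sin (1 / max t₀ |x|)

theorem continuous_sinOneDivBridge {t₀ : ℝ} (ht₀ : 0 < t₀) : Continuous (sinOneDivBridge t₀) := by
  have hpos : ∀ x, max t₀ |x| ≠ 0 := fun x => (lt_max_of_lt_left ht₀).ne'
  unfold sinOneDivBridge
  fun_prop (disch := exact hpos _)

theorem abs_sinOneDivBridge_le (t₀ x : ℝ) : |sinOneDivBridge t₀ x| ≤ 1 := by
  set m := max t₀ |x|
  have hx : |x / m| ≤ 1 := by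
    rw [abs_div]
    exact div_le_one_of_le₀ ((le_max_right _ _).trans (le_abs_self m)) (abs_nonneg _)
  rw [sinOneDivBridge, abs_mul]
  exact mul_le_one₀ hx (abs_nonneg _) (abs_sin_le_one _)

theorem sinOneDivBridge_of_le_abs {t₀ x : ℝ} (h : t₀ ≤ |x|) :
    sinOneDivBridge t₀ x = sin (1 / x) := by
  rw [sinOneDivBridge, max_eq_right h]
  rcases eq_or_ne x 0 with rfl | hx
  · simp
  rcases le_or_gt 0 x with h0 | h0
  · rw [abs_of_nonneg h0, div_self hx, one_mul]
  · rw [abs_of_neg h0, div_neg, div_self hx, one_div_neg_eq_neg_one_div, sin_neg]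
    ring

theorem mk_sinOneDivBridge_mem_doubleSineCurve {t₀ x : ℝ} (ht₀ : 0 < t₀) (hx : |x| ≤ 1)
    (h : t₀ ≤ |x|) : (x, sinOneDivBridge t₀ x) ∈ doubleSineCurve := by
  rw [sinOneDivBridge_of_le_abs h]
  exact mk_sin_one_div_mem_doubleSineCurve hx (abs_pos.mp (ht₀.trans_le h))

theorem exists_mem_doubleSineCurve_dist_le {t₀ x : ℝ} (ht₀ : 0 < t₀) (hx : |x| ≤ 1) :
    ∃ p ∈ doubleSineCurve, dist (x, sinOneDivBridge t₀ x) p ≤ t₀ := by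
  rcases le_or_gt t₀ |x| with h | h
  · exact ⟨_, mk_sinOneDivBridge_mem_doubleSineCurve ht₀ hx h, by simpa using ht₀.le⟩
  · refine ⟨_, mk_zero_mem_doubleSineCurve (abs_sinOneDivBridge_le t₀ x), ?_⟩
    simpa [Prod.dist_eq, Real.dist_eq] using h.le

/-- The double topologist's sine curve is not an AANR. -/
theorem doubleSineCurve_not_isAANR : ¬ IsAANR ↥doubleSineCurve := by
  intro h
  obtain ⟨δ, hδ, hpush⟩ := h.exists_continuous_push (isCompact_closedBall 0 1)
    doubleSineCurve_subset_closedBall (ε := 1 / 2) (by norm_num)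
  set t₀ := min δ 1
  have ht₀ : 0 < t₀ := lt_min hδ one_pos
  let σ : ℝ → ℝ × ℝ := fun s => (cos s, sinOneDivBridge t₀ (cos s))
  obtain ⟨ρ, hρ, hρX, hρσ⟩ := hpush σ
    (continuous_cos.prodMk ((continuous_sinOneDivBridge ht₀).comp continuous_cos))
    (fun s => by simpa [Prod.norm_def] using ⟨abs_cos_le_one s, abs_sinOneDivBridge_le t₀ _⟩)
    (fun s => (exists_mem_doubleSineCurve_dist_le ht₀ (abs_cos_le_one s)).imp
      fun _ hp => ⟨hp.1, hp.2.trans (min_le_left _ _)⟩)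
  have hσX : ∀ s, |cos s| = 1 → σ s ∈ doubleSineCurve := fun s hs =>
    mk_sinOneDivBridge_mem_doubleSineCurve ht₀ hs.le (hs ▸ min_le_right _ _)
  have h0 : dist (ρ 0).1 (σ 0).1 ≤ 1 / 2 := (le_max_left _ _).trans (hρσ 0 (hσX 0 (by simp)))
  have hπ : dist (ρ π).1 (σ π).1 ≤ 1 / 2 := (le_max_left _ _).trans (hρσ π (hσX π (by simp)))
  simp only [σ, cos_zero, cos_pi, Real.dist_eq, abs_le] at h0 hπ
  linarith [fst_pos_of_mem_doubleSineCurve hρ hρX (a := 0) (by linarith) π]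
end

section
/- A pointed compactum (X, x₀) is a PAANR if and only if the following holds: for every compactum Y, every topological embedding θ : X → Y, and every decreasing sequence Y₁ ⊇ Y₂ ⊇ ⋯ of closed subsets of Y with ⋂ₙ Yₙ = θ(X), there exists a sequence of continuous functions rₙ : Yₙ → X such that rₙ(θ(x₀)) = x₀ for every n and rₙ(θ(x)) → x uniformly over x ∈ X (uniform convergence with respect to some, equivalently any, compatible metric on X). -/
open Topology

universe u v

/-- A pointed compactum `(X, x₀)` is a *pointed approximative absolute neighborhood
retract* (PAANR) if for every compact metric space `Y`, every topological embedding
`θ : X → Y`, and every `ε > 0`, there exist `δ > 0` and a continuous map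
`r : U_δ → X` (where `U_δ = {y | dist (y, θ(X)) ≤ δ}`) with `r (θ x₀) = x₀` which moves
the points of `θ(X)` by at most `ε`. -/
def IsPAANR (X : Type u) [TopologicalSpace X] (x₀ : X) : Prop :=
  ∀ (Y : Type v) [MetricSpace Y] [CompactSpace Y] (θ : X → Y),
    IsEmbedding θ →
    ∀ ε > (0 : ℝ), ∃ δ > (0 : ℝ), ∃ r : Y → X,
      ContinuousOn r {y | Metric.infDist y (Set.range θ) ≤ δ} ∧
      r (θ x₀) = x₀ ∧
      ∀ x : X, dist (θ (r (θ x))) (θ x) ≤ ε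

/-- `IsPAANR` does not depend on the universe of the test spaces `Y`, thanks to the
Kuratowski embedding into `ℓ^∞(ℕ)`. -/
lemma isPAANR_transfer.{u₁, w, w'} {X : Type u₁} [TopologicalSpace X] {x₀ : X}
    (h : IsPAANR.{u₁, w} X x₀) : IsPAANR.{u₁, w'} X x₀ := by
  intro Y _ _ θ hθ ε hε
  haveI : CompactSpace (Set.range (kuratowskiEmbedding Y)) :=
    isCompact_iff_compactSpace.mp
      (isCompact_range (kuratowskiEmbedding.isometry Y).continuous)
  set ι : Y → ULift.{w} (Set.range (kuratowskiEmbedding Y)) :=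
    fun y => ULift.up ⟨kuratowskiEmbedding Y y, Set.mem_range_self y⟩ with hιdef
  have hι : Isometry ι := fun a b => kuratowskiEmbedding.isometry Y a b
  have hθ' : IsEmbedding (ι ∘ θ) := hι.isEmbedding.comp hθ
  obtain ⟨δ, hδ, r, hrc, hr0, hre⟩ := h _ (ι ∘ θ) hθ' ε hε
  refine ⟨δ, hδ, r ∘ ι, ?_, hr0, fun x => ?_⟩
  · refine hrc.comp hι.continuous.continuousOn (fun y hy => ?_)
    have : Set.range (ι ∘ θ) = ι '' Set.range θ := Set.range_comp ι θ
    simp only [Set.mem_setOf_eq, this, Metric.infDist_image hι]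
    exact hy
  · have h1 := hre x
    have h2 : dist (ι (θ ((r ∘ ι) (θ x)))) (ι (θ x)) = dist (θ ((r ∘ ι) (θ x))) (θ x) :=
      hι.dist_eq _ _
    calc dist (θ ((r ∘ ι) (θ x))) (θ x) = _ := h2.symm
      _ ≤ ε := h1

lemma inv_unif {X : Type*} [MetricSpace X] [CompactSpace X] {Y : Type*} [MetricSpace Y]
    (θ : X → Y) (hθ : IsEmbedding θ) {ε : ℝ} (hε : 0 < ε) :
    ∃ η > (0:ℝ), ∀ a b : X, dist (θ a) (θ b) ≤ η → dist a b ≤ ε := by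
  by_cases hK : {p : X × X | ε ≤ dist p.1 p.2}.Nonempty
  · have hKcl : IsClosed {p : X × X | ε ≤ dist p.1 p.2} :=
      isClosed_le continuous_const (by fun_prop)
    have hKc : IsCompact {p : X × X | ε ≤ dist p.1 p.2} :=
      hKcl.isCompact
    have hcont : Continuous fun p : X × X => dist (θ p.1) (θ p.2) :=
      (hθ.continuous.comp continuous_fst).dist (hθ.continuous.comp continuous_snd)
    obtain ⟨p₀, hp₀, hmin⟩ := hKc.exists_isMinOn hK hcont.continuousOn
    have hpos : 0 < dist (θ p₀.1) (θ p₀.2) := by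
      rw [dist_pos]
      intro h
      have h2 := hθ.injective h
      have h3 : dist p₀.1 p₀.2 = 0 := by rw [h2]; simp
      have hε' : ε ≤ dist p₀.1 p₀.2 := hp₀
      linarith
    refine ⟨dist (θ p₀.1) (θ p₀.2) / 2, by linarith, fun a b hab => ?_⟩
    by_contra h
    push_neg at h
    have hmem : (a, b) ∈ {p : X × X | ε ≤ dist p.1 p.2} := le_of_lt h
    have := hmin hmem
    simp only [Set.mem_setOf_eq] at this
    linarith
  · refine ⟨1, one_pos, fun a b _ => ?_⟩
    by_contra h
    push_neg at h
    exact hK ⟨(a, b), le_of_lt h⟩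

lemma eventually_subset {Y : Type*} [MetricSpace Y] [CompactSpace Y]
    (S : Set Y) (Yn : ℕ → Set Y) (hcl : ∀ n, IsClosed (Yn n))
    (hdec : ∀ n, Yn (n + 1) ⊆ Yn n) (hint : (⋂ n, Yn n) = S)
    {δ : ℝ} (hδ : 0 < δ) :
    ∃ N, ∀ n ≥ N, Yn n ⊆ {y | Metric.infDist y S ≤ δ} := by
  have hmono : Antitone Yn := antitone_nat_of_succ_le hdec
  set K : ℕ → Set Y := fun n => Yn n ∩ {y | δ ≤ Metric.infDist y S} with hK
  have hKcl : ∀ n, IsClosed (K n) := fun n =>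
    (hcl n).inter (isClosed_le continuous_const (Metric.continuous_infDist_pt S))
  have hKmono : Antitone K := fun m n h => Set.inter_subset_inter_left _ (hmono h)
  have hKempty : ∃ N, K N = ∅ := by
    by_contra hne
    push_neg at hne
    have hne' : ∀ n, (K n).Nonempty := hne
    have hdir : Directed (· ⊇ ·) K := hKmono.directed_ge
    have := IsCompact.nonempty_iInter_of_directed_nonempty_isCompact_isClosed K hdir hne'
      (fun n => (hKcl n).isCompact) hKcl
    obtain ⟨y, hy⟩ := this
    simp only [Set.mem_iInter, hK, Set.mem_inter_iff, Set.mem_setOf_eq] at hy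
    have hyS : y ∈ S := by
      rw [← hint]; exact Set.mem_iInter.2 fun n => (hy n).1
    have := (hy 0).2
    rw [Metric.infDist_zero_of_mem hyS] at this
    linarith
  obtain ⟨N, hN⟩ := hKempty
  refine ⟨N, fun n hn y hy => ?_⟩
  by_contra h
  have h' : ¬ Metric.infDist y S ≤ δ := h
  have : y ∈ K N := hKmono hn ⟨hy, Set.mem_setOf_eq ▸ le_of_lt (not_le.mp h')⟩
  rw [hN] at this
  exact this

/-- A pointed compactum `(X, x₀)` is a PAANR if and only if: for every compactum `Y`,
every topological embedding `θ : X → Y`, and every decreasing sequence `Y₁ ⊇ Y₂ ⊇ ⋯` of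
closed subsets of `Y` with `⋂ n, Yₙ = θ(X)`, there is a sequence of continuous maps
`rₙ : Yₙ → X` with `rₙ (θ x₀) = x₀` for every `n` and `rₙ (θ x) → x` uniformly over
`x ∈ X` (with respect to a chosen compatible metric on `X`). -/
theorem paanr_iff_approximate_pointed_retractions_onto_decreasing_closed_sets
    (X : Type u) [MetricSpace X] [CompactSpace X] [Nonempty X] (x₀ : X) :
    IsPAANR X x₀ ↔
      ∀ (Y : Type v) [TopologicalSpace Y] [CompactSpace Y]
        [TopologicalSpace.MetrizableSpace Y] [Nonempty Y] (θ : X → Y),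
        IsEmbedding θ →
        ∀ Yn : ℕ → Set Y, (∀ n, IsClosed (Yn n)) → (∀ n, Yn (n + 1) ⊆ Yn n) →
          (⋂ n, Yn n) = Set.range θ →
          ∃ r : ℕ → Y → X,
            (∀ n, ContinuousOn (r n) (Yn n)) ∧
            (∀ n, r n (θ x₀) = x₀) ∧
            ∀ ε > (0 : ℝ), ∃ N : ℕ, ∀ n ≥ N, ∀ x : X, dist (r n (θ x)) x ≤ ε := by
  constructor
  · intro hP₀ Y _ _ _ _ θ hθ Yn hcl hdec hint
    have hP : IsPAANR.{u, v} X x₀ := isPAANR_transfer hP₀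
    classical
    letI : MetricSpace Y := TopologicalSpace.metrizableSpaceMetric Y
    set C : ℝ := Metric.diam (Set.univ : Set X) + 1 with hCdef
    have hC : 0 < C := by
      have := Metric.diam_nonneg (s := (Set.univ : Set X))
      simp only [hCdef]; linarith
    set good : ℕ → ℕ → Prop := fun k n => ∃ r : Y → X,
      ContinuousOn r (Yn n) ∧ r (θ x₀) = x₀ ∧
      ∀ x, dist (r (θ x)) x ≤ C / (k + 1) with hgood
    have good0 : ∀ n, good 0 n := by
      intro n
      refine ⟨fun _ => x₀, continuousOn_const, rfl, fun x => ?_⟩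
      have h1 : dist x₀ x ≤ Metric.diam (Set.univ : Set X) :=
        Metric.dist_le_diam_of_mem isCompact_univ.isBounded trivial trivial
      have h2 : C / ((0 : ℕ) + 1) = C := by norm_num
      rw [h2]
      simp only [hCdef]; linarith
    have hQ : ∀ k : ℕ, ∃ N, ∀ n ≥ N, good k n := by
      intro k
      have hεk : (0 : ℝ) < C / (k + 1) := by positivity
      obtain ⟨η, hη, hinv⟩ := inv_unif θ hθ hεk
      obtain ⟨δ, hδ, r, hrc, hr0, hre⟩ := hP Y θ hθ η hη
      obtain ⟨N, hN⟩ := eventually_subset (Set.range θ) Yn hcl hdec hint hδ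
      exact ⟨N, fun n hn => ⟨r, hrc.mono (hN n hn), hr0, fun x => hinv _ _ (hre x)⟩⟩
    set g : ℕ → ℕ := fun n => Nat.findGreatest (fun k => good k n) n with hg
    have hgspec : ∀ n, good (g n) n := fun n =>
      Nat.findGreatest_spec (P := fun k => good k n) (Nat.zero_le n) (good0 n)
    choose r hr1 hr2 hr3 using hgspec
    refine ⟨r, hr1, hr2, ?_⟩
    intro ε hε
    obtain ⟨k, hk⟩ := exists_nat_gt (C / ε)
    obtain ⟨N₁, hN₁⟩ := hQ k
    refine ⟨max N₁ k, fun n hn x => ?_⟩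
    have h1 : good k n := hN₁ n (le_trans (le_max_left _ _) hn)
    have h2 : k ≤ g n := Nat.le_findGreatest (le_trans (le_max_right _ _) hn) h1
    have h3 : dist (r n (θ x)) x ≤ C / (g n + 1) := hr3 n x
    have h4 : C / ((g n : ℝ) + 1) ≤ C / ((k : ℝ) + 1) := by
      apply div_le_div_of_nonneg_left hC.le (by positivity)
      exact_mod_cast Nat.succ_le_succ h2
    have h5 : C / ((k : ℝ) + 1) ≤ ε := by
      rw [div_le_iff₀ (by positivity)]
      have h6 : C / ε < (k : ℝ) := hk
      rw [div_lt_iff₀ hε] at h6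
      nlinarith
    linarith
  · intro h
    refine isPAANR_transfer.{u, v} ?_
    intro Y _ _ θ hθ ε hε
    haveI : Nonempty Y := ⟨θ (Classical.arbitrary X)⟩
    set Yn : ℕ → Set Y := fun n => {y | Metric.infDist y (Set.range θ) ≤ 1 / (n + 1)}
      with hYn
    have hcl : ∀ n, IsClosed (Yn n) := fun n =>
      isClosed_le (Metric.continuous_infDist_pt _) continuous_const
    have hdec : ∀ n, Yn (n + 1) ⊆ Yn n := by
      intro n y hy
      simp only [hYn, Set.mem_setOf_eq] at hy ⊢
      have h2 : (1 : ℝ) / ((n : ℝ) + 1 + 1) ≤ 1 / ((n : ℝ) + 1) := by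
        apply div_le_div_of_nonneg_left one_pos.le (by positivity); linarith
      push_cast at hy ⊢
      linarith
    have hrcl : IsClosed (Set.range θ) := (isCompact_range hθ.continuous).isClosed
    have hrne : (Set.range θ).Nonempty := Set.range_nonempty θ
    have hint : (⋂ n, Yn n) = Set.range θ := by
      ext y
      simp only [Set.mem_iInter, hYn, Set.mem_setOf_eq]
      constructor
      · intro hy
        have h0 : Metric.infDist y (Set.range θ) ≤ 0 := by
          by_contra hc
          push_neg at hc
          obtain ⟨n, hn⟩ := exists_nat_gt (1 / Metric.infDist y (Set.range θ))
          have h1 := hy n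
          have h2 : 1 / ((n : ℝ) + 1) < Metric.infDist y (Set.range θ) := by
            rw [div_lt_iff₀ (by positivity)]
            rw [div_lt_iff₀ hc] at hn
            nlinarith
          linarith
        have h0' : Metric.infDist y (Set.range θ) = 0 :=
          le_antisymm h0 Metric.infDist_nonneg
        exact (hrcl.mem_iff_infDist_zero hrne).2 h0'
      · intro hy n
        rw [Metric.infDist_zero_of_mem hy]
        positivity
    obtain ⟨r, hrc, hr0, hconv⟩ := h Y θ hθ Yn hcl hdec hint
    have hθu : UniformContinuous θ :=
      CompactSpace.uniformContinuous_of_continuous hθ.continuous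
    obtain ⟨δ', hδ', hθε⟩ := Metric.uniformContinuous_iff.mp hθu ε hε
    obtain ⟨N, hN⟩ := hconv (δ' / 2) (by positivity)
    refine ⟨1 / ((N : ℝ) + 1), by positivity, r N, hrc N, hr0 N, fun x => ?_⟩
    have h1 : dist (r N (θ x)) x ≤ δ' / 2 := hN N le_rfl x
    have h2 : dist (r N (θ x)) x < δ' := by linarith
    exact le_of_lt (hθε h2)
end

section
/- Let (X, x₀) be a pointed compactum. Then X is an AANR if and only if the following holds: for every compactum Z, every closed subset Y ⊆ Z, every point y₀ that is an isolated point of Y, every decreasing sequence Y₁ ⊇ Y₂ ⊇ ⋯ of closed subsets of Z with ⋂ₙ Yₙ = Y, and every continuous function λ : Y → X with λ(y₀) = x₀, there exists a sequence of continuous functions λₙ : Yₙ → X such that λₙ(y₀) = λ(y₀) for every n and λₙ(y) → λ(y) uniformly over y ∈ Y. -/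
/-!
Both directions go through the Hilbert cube `Q = ℕ → [0, 1]`, into which every compactum embeds.

If `X` is an AANR, embed it in `Q`, extend `λ` to a map `Z → Q` by Tietze and compose with an
approximate retraction of a neighbourhood of `X`: this approximates `λ` on a neighbourhood of `Y`,
hence on some `Yₙ`. The value at `y₀` is repaired by making the map constant on a closed
neighbourhood of `y₀` that meets `Y` only in `y₀`, and a diagonal choice over the accuracies gives
the sequence `λₙ`.

Conversely, given `X ⊆ Y`, embed `Y` in `Q`, add an isolated point sent to `x₀`, and take for
`Yₙ` the closed `1/(n+1)`-neighbourhoods of `X` in `Y`: the resulting `λₙ`, read on `Y`, is an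
approximate retraction of such a neighbourhood.
-/

open Topology

universe u v

open Metric Set Filter TopologicalSpace

universe w

instance ULift.instMetrizableSpace {α : Type*} [TopologicalSpace α] [MetrizableSpace α] :
    MetrizableSpace (ULift.{v} α) :=
  Homeomorph.ulift.isEmbedding.metrizableSpace

theorem exists_seq_mem_eventually_mem {α : Type*} {S E : ℕ → Set α} (hS : Monotone S)
    (hE : Antitone E) (h0 : (S 0).Nonempty) (h : ∀ k, ∃ N, (S N ∩ E k).Nonempty) :
    ∃ l : ℕ → α, (∀ n, l n ∈ S n) ∧ ∀ k, ∀ᶠ n in atTop, l n ∈ E k := by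
  classical
  choose N a haS haE using h
  obtain ⟨b, hb⟩ := h0
  set M := partialSups N
  -- `K n` is the best accuracy already available at stage `n`.
  set K : ℕ → ℕ := fun n => Nat.findGreatest (fun k => M k ≤ n) n
  have haS' : ∀ n, M 0 ≤ n → a (K n) ∈ S n := fun n hn =>
    hS ((le_partialSups N _).trans
      (Nat.findGreatest_spec (P := fun k => M k ≤ n) (Nat.zero_le n) hn)) (haS _)
  refine ⟨fun n => if M 0 ≤ n then a (K n) else b, fun n => ?_, fun k => ?_⟩
  · dsimp only
    split_ifs with hn
    · exact haS' n hn
    · exact hS (Nat.zero_le n) hb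
  · filter_upwards [eventually_ge_atTop (max k (M k))] with n hn
    have hMk : M k ≤ n := (le_max_right _ _).trans hn
    rw [if_pos ((M.monotone (Nat.zero_le k)).trans hMk)]
    exact hE (Nat.le_findGreatest ((le_max_left _ _).trans hn) hMk) (haE _)

theorem Topology.IsEmbedding.exists_dist_le_of_dist_image_le {X Y : Type*} [MetricSpace X]
    [CompactSpace X] [MetricSpace Y] {θ : X → Y} (hθ : IsEmbedding θ) {ε : ℝ} (hε : 0 < ε) :
    ∃ δ > 0, ∀ a b, dist (θ a) (θ b) ≤ δ → dist a b ≤ ε := by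
  have : CompactSpace (range θ) := isCompact_iff_compactSpace.mp (isCompact_range hθ.continuous)
  obtain ⟨δ, hδ, h⟩ := Metric.uniformContinuous_iff_le.mp
    (CompactSpace.uniformContinuous_of_continuous hθ.toHomeomorph.symm.continuous) ε hε
  exact ⟨δ, hδ, fun a b hab => by
    simpa using h (a := hθ.toHomeomorph a) (b := hθ.toHomeomorph b) hab⟩

theorem Topology.IsEmbedding.continuousOn_extend_id {X Z : Type*} [TopologicalSpace X]
    [TopologicalSpace Z] {Φ : X → Z} (hΦ : IsEmbedding Φ) (e : Z → X) :
    ContinuousOn (Function.extend Φ id e) (range Φ) := by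
  rw [continuousOn_iff_continuous_domRestrict]
  convert hΦ.toHomeomorph.symm.continuous using 1
  ext ⟨_, x, rfl⟩
  simp [hΦ.injective.extend_apply]

theorem iInter_infDist_le_one_div_eq {Y : Type*} [PseudoMetricSpace Y] {K : Set Y}
    (hK : IsClosed K) (hne : K.Nonempty) :
    ⋂ n : ℕ, {y | infDist y K ≤ 1 / (n + 1)} = K := by
  ext y
  simp only [mem_iInter, mem_ofPred_eq]
  refine ⟨fun h => ?_, fun hy n => by rw [infDist_zero_of_mem hy]; positivity⟩
  rw [← hK.closure_eq, mem_closure_iff_infDist_zero hne]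
  exact (ge_of_tendsto' tendsto_one_div_add_atTop_nhds_zero_nat h).antisymm infDist_nonneg

def PointedApproxExtensionProperty (X : Type u) [MetricSpace X] (x₀ : X) : Prop :=
  ∀ (Z : Type v) [TopologicalSpace Z] [CompactSpace Z]
    [TopologicalSpace.MetrizableSpace Z] [Nonempty Z] (Y : Set Z), IsClosed Y →
    ∀ y₀ ∈ Y, (∃ U : Set Z, IsOpen U ∧ U ∩ Y = {y₀}) →
    ∀ Yn : ℕ → Set Z, (∀ n, IsClosed (Yn n)) → (∀ n, Yn (n + 1) ⊆ Yn n) →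
      (⋂ n, Yn n) = Y →
      ∀ lam : Z → X, ContinuousOn lam Y → lam y₀ = x₀ →
        ∃ l : ℕ → Z → X,
          (∀ n, ContinuousOn (l n) (Yn n)) ∧
          (∀ n, l n y₀ = lam y₀) ∧
          ∀ ε > (0 : ℝ), ∃ N : ℕ, ∀ n ≥ N, ∀ y ∈ Y, dist (l n y) (lam y) ≤ ε

section

variable {X : Type u} [MetricSpace X] [CompactSpace X]

theorem IsAANR.exists_approx_extension (hX : IsAANR.{u, w} X) {Z : Type*} [TopologicalSpace Z]
    [NormalSpace Z] {Y : Set Z} (hY : IsClosed Y) {lam : Z → X} (hlam : ContinuousOn lam Y)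
    {ε : ℝ} (hε : 0 < ε) :
    ∃ W : Set Z, IsOpen W ∧ Y ⊆ W ∧ ∃ f : Z → X, ContinuousOn f W ∧
      ∀ y ∈ Y, dist (f y) (lam y) ≤ ε := by
  obtain ⟨F, hF⟩ := Metric.PiNatEmbed.exists_embedding_to_hilbert_cube (X := X)
  let : MetricSpace (ULift.{w} (ℕ → unitInterval)) := metrizableSpaceMetric _
  set θ : X → ULift.{w} (ℕ → unitInterval) := ULift.up ∘ F
  have hθ : IsEmbedding θ := Homeomorph.ulift.symm.isEmbedding.comp hF
  obtain ⟨ε', hε', hθε⟩ := hθ.exists_dist_le_of_dist_image_le hε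
  obtain ⟨δ, hδ, r, hr, hrθ⟩ := hX _ θ hθ ε' hε'
  obtain ⟨g, hg⟩ := ContinuousMap.exists_restrict_eq hY ⟨F ∘ Y.domRestrict lam,
    hF.continuous.comp hlam.domRestrict⟩
  have hgY : ∀ y ∈ Y, ULift.up (g y) = θ (lam y) := fun y hy =>
    congrArg ULift.up (DFunLike.congr_fun hg ⟨y, hy⟩)
  have hgc : Continuous (ULift.up.{w} ∘ g) := continuous_uliftUp.comp g.continuous
  refine ⟨{z | infDist (ULift.up (g z)) (range θ) < δ},
    isOpen_lt ((continuous_infDist_pt _).comp hgc) continuous_const, fun y hy => ?_,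
    r ∘ ULift.up ∘ g, hr.comp hgc.continuousOn fun _ hz => (show _ < δ from hz).le,
    fun y hy => ?_⟩
  · simp [hgY y hy, infDist_zero_of_mem (mem_range_self _), hδ]
  · simpa [hgY y hy] using hθε _ _ (hrθ (lam y))

theorem IsAANR.exists_approx_extension_of_isolated (hX : IsAANR.{u, w} X) {Z : Type*}
    [TopologicalSpace Z] [NormalSpace Z] [RegularSpace Z] {Y : Set Z} (hY : IsClosed Y)
    {lam : Z → X} (hlam : ContinuousOn lam Y) {y₀ : Z} {U : Set Z} (hU : IsOpen U)
    (hUY : U ∩ Y = {y₀}) {ε : ℝ} (hε : 0 < ε) :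
    ∃ W : Set Z, IsOpen W ∧ Y ⊆ W ∧ ∃ f : Z → X, ContinuousOn f W ∧ f y₀ = lam y₀ ∧
      ∀ y ∈ Y, dist (f y) (lam y) ≤ ε := by
  classical
  obtain ⟨W, hW, hYW, f, hf, hfY⟩ := hX.exists_approx_extension hY hlam hε
  have hy₀U : y₀ ∈ U := (hUY.symm ▸ mem_singleton y₀ : y₀ ∈ U ∩ Y).1
  -- A closed neighbourhood `t` of `y₀` inside `U` meets `Y` only in `y₀`, so `Y` lies in
  -- the open set `interior t ∪ tᶜ`, on which `f` may be redefined to be constant on `t`.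
  obtain ⟨t, ht, htc, htU⟩ := exists_mem_nhds_isClosed_subset (hU.mem_nhds hy₀U)
  have hYt : ∀ y ∈ Y, y ∈ t → y = y₀ := fun y hy hyt =>
    eq_of_mem_singleton (hUY ▸ ⟨htU hyt, hy⟩)
  have hy₀t : y₀ ∈ t := mem_of_mem_nhds ht
  refine ⟨W ∩ (interior t ∪ tᶜ), hW.inter (isOpen_interior.union htc.isOpen_compl),
    fun y hy => ⟨hYW hy, ?_⟩, t.piecewise (fun _ => lam y₀) f, ?_,
    piecewise_eq_of_mem _ _ _ hy₀t, fun y hy => ?_⟩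
  · by_cases hyt : y ∈ t
    · exact Or.inl (hYt y hy hyt ▸ mem_interior_iff_mem_nhds.mpr ht)
    · exact Or.inr hyt
  · rw [inter_union_distrib_left]
    refine ContinuousOn.union_of_isOpen ?_ ?_ (hW.inter isOpen_interior)
      (hW.inter htc.isOpen_compl)
    · exact continuousOn_const.congr fun z hz => piecewise_eq_of_mem _ _ _ (interior_subset hz.2)
    · exact (hf.mono inter_subset_left).congr fun z hz => piecewise_eq_of_notMem _ _ _ hz.2
  · by_cases hyt : y ∈ t
    · obtain rfl := hYt y hy hyt
      simp [piecewise_eq_of_mem _ _ _ hy₀t, hε.le]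
    · rw [piecewise_eq_of_notMem _ _ _ hyt]
      exact hfY y hy

theorem IsAANR.exists_seq_approx_extension (hX : IsAANR.{u, w} X) {Z : Type*}
    [TopologicalSpace Z] [CompactSpace Z] [NormalSpace Z] [RegularSpace Z] {Y : Set Z}
    {Yn : ℕ → Set Z} (hYn : ∀ n, IsClosed (Yn n)) (hanti : Antitone Yn) (hint : ⋂ n, Yn n = Y)
    {y₀ : Z} {U : Set Z} (hU : IsOpen U) (hUY : U ∩ Y = {y₀}) {lam : Z → X}
    (hlam : ContinuousOn lam Y) :
    ∃ l : ℕ → Z → X, (∀ n, ContinuousOn (l n) (Yn n)) ∧ (∀ n, l n y₀ = lam y₀) ∧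
      ∀ ε > (0 : ℝ), ∃ N : ℕ, ∀ n ≥ N, ∀ y ∈ Y, dist (l n y) (lam y) ≤ ε := by
  have hY : IsClosed Y := hint ▸ isClosed_iInter hYn
  have happrox : ∀ k : ℕ, ∃ N, ∃ f : Z → X, (ContinuousOn f (Yn N) ∧ f y₀ = lam y₀) ∧
      ∀ y ∈ Y, dist (f y) (lam y) ≤ 1 / (k + 1) := fun k => by
    obtain ⟨W, hW, hYW, f, hf, hf₀, hfY⟩ :=
      hX.exists_approx_extension_of_isolated hY hlam hU hUY (ε := 1 / (k + 1)) (by positivity)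
    obtain ⟨N, hN⟩ := exists_subset_nhds_of_isCompact' hanti.directed_ge
      (fun n => (hYn n).isCompact) hYn fun z hz => hW.mem_nhds (hYW (hint ▸ hz))
    exact ⟨N, f, ⟨hf.mono hN, hf₀⟩, hfY⟩
  obtain ⟨l, hlS, hlE⟩ := exists_seq_mem_eventually_mem
    (S := fun n => {f : Z → X | ContinuousOn f (Yn n) ∧ f y₀ = lam y₀})
    (E := fun k => {f : Z → X | ∀ y ∈ Y, dist (f y) (lam y) ≤ 1 / (k + 1)})
    (fun m n hmn f hf => ⟨hf.1.mono (hanti hmn), hf.2⟩)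
    (fun j k hjk f hf y hy => (hf y hy).trans (Nat.one_div_le_one_div hjk))
    ⟨fun _ => lam y₀, continuousOn_const, rfl⟩ happrox
  refine ⟨l, fun n => (hlS n).1, fun n => (hlS n).2, fun ε hε => ?_⟩
  obtain ⟨k, hk⟩ := exists_nat_one_div_lt hε
  obtain ⟨N, hN⟩ := eventually_atTop.mp (hlE k)
  exact ⟨N, fun n hn y hy => (hN n hn y hy).trans hk.le⟩

theorem IsAANR.pointedApproxExtensionProperty (hX : IsAANR.{u, w} X) (x₀ : X) :
    PointedApproxExtensionProperty.{u, v} X x₀ := by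
  intro Z _ _ _ _ Y _ y₀ _ ⟨U, hU, hUY⟩ Yn hYn hdec hint lam hlam _
  exact hX.exists_seq_approx_extension hYn (antitone_nat_of_succ_le hdec) hint hU hUY hlam

theorem PointedApproxExtensionProperty.exists_approx_retraction {x₀ : X}
    (H : PointedApproxExtensionProperty.{u, v} X x₀) {Y : Type*} [MetricSpace Y] {θ : X → Y}
    (hθ : IsEmbedding θ) {Z : Type v} [TopologicalSpace Z] [CompactSpace Z] [MetrizableSpace Z]
    {ι : Y → Z} (hι : IsClosedEmbedding ι) {U : Set Z} (hU : IsOpen U)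
    (hUι : Disjoint U (range ι)) {z₁ : Z} (hz₁ : z₁ ∈ U) {ε : ℝ} (hε : 0 < ε) :
    ∃ δ > (0 : ℝ), ∃ r : Y → X, ContinuousOn r {y | infDist y (range θ) ≤ δ} ∧
      ∀ x, dist (θ (r (θ x))) (θ x) ≤ ε := by
  have : Nonempty Z := ⟨z₁⟩
  have hK : IsClosed (range θ) := (isCompact_range hθ.continuous).isClosed
  have hz₁ι : z₁ ∉ range ι := disjoint_left.mp hUι hz₁
  set Ys := ι '' range θ ∪ {z₁}
  set Yn : ℕ → Set Z := fun n => ι '' {y | infDist y (range θ) ≤ 1 / (n + 1)} ∪ {z₁}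
  set lam : Z → X := Function.extend (ι ∘ θ) id fun _ => x₀
  have hlam : ∀ x, lam (ι (θ x)) = x := (hι.injective.comp hθ.injective).extend_apply _ _
  have hlam₁ : lam z₁ = x₀ := Function.extend_apply' _ _ _ fun ⟨x, hx⟩ => hz₁ι ⟨θ x, hx⟩
  have hlamc : ContinuousOn lam Ys := by
    refine ContinuousOn.union_of_isClosed ?_ (continuousOn_singleton _ _) (hι.isClosedMap _ hK)
      isClosed_singleton
    rw [← range_comp]
    exact (hι.isEmbedding.comp hθ).continuousOn_extend_id _
  have hiso : U ∩ Ys = {z₁} := by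
    rw [inter_union_distrib_left, (hUι.mono_right (image_subset_range ι _)).inter_eq,
      empty_union, inter_eq_right.mpr (singleton_subset_iff.mpr hz₁)]
  have hint : ⋂ n, Yn n = Ys := by
    rw [← iInter_union, ← hι.injective.injOn.image_iInter_eq,
      iInter_infDist_le_one_div_eq hK (range_nonempty_iff_nonempty.mpr ⟨x₀⟩)]
  obtain ⟨l, hl, -, hlim⟩ := H Z Ys ((hι.isClosedMap _ hK).union isClosed_singleton) z₁
    (Or.inr rfl) ⟨U, hU, hiso⟩ Yn
    (fun n => (hι.isClosedMap _ (isClosed_le (continuous_infDist_pt _) continuous_const)).union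
      isClosed_singleton)
    (fun n => union_subset_union_left _ (image_mono fun y hy =>
      show infDist y _ ≤ _ from le_trans hy (Nat.one_div_le_one_div n.le_succ)))
    hint lam hlamc hlam₁
  obtain ⟨ε', hε', hθε⟩ := Metric.uniformContinuous_iff_le.mp
    (CompactSpace.uniformContinuous_of_continuous hθ.continuous) ε hε
  obtain ⟨N, hN⟩ := hlim ε' hε'
  refine ⟨1 / (N + 1), by positivity, l N ∘ ι,
    (hl N).comp hι.continuous.continuousOn fun y hy => Or.inl (mem_image_of_mem ι hy),
    fun x => hθε ?_⟩
  simpa [hlam] using hN N le_rfl (ι (θ x)) (Or.inl (mem_image_of_mem ι (mem_range_self x)))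

theorem PointedApproxExtensionProperty.isAANR {x₀ : X}
    (H : PointedApproxExtensionProperty.{u, v} X x₀) : IsAANR.{u, w} X := by
  intro Y _ _ θ hθ ε hε
  -- The property only speaks of compacta in universe `v`: move `Y` there through the Hilbert cube,
  -- next to an extra point `inr ()` that will be isolated.
  obtain ⟨G, hG⟩ := Metric.PiNatEmbed.exists_embedding_to_hilbert_cube (X := Y)
  let ι : Y → ULift.{v} ((ℕ → unitInterval) ⊕ Unit) := fun y => ULift.up (Sum.inl (G y))
  have hι : IsClosedEmbedding ι := Homeomorph.ulift.symm.isClosedEmbedding.comp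
    (IsClosedEmbedding.inl.comp (hG.continuous.isClosedEmbedding hG.injective))
  refine H.exists_approx_retraction hθ hι (isOpen_range_inr.preimage continuous_uliftDown) ?_
    (z₁ := ULift.up (Sum.inr ())) ⟨(), rfl⟩ hε
  exact disjoint_left.mpr fun _ ⟨_, h⟩ ⟨_, h'⟩ => by simp [ι, ← h'] at h

end

theorem isAANR_iff_pointed_extension_at_isolated_points_general
    (X : Type u) [MetricSpace X] [CompactSpace X] (x₀ : X) :
    IsAANR X ↔
      ∀ (Z : Type v) [TopologicalSpace Z] [CompactSpace Z]
        [TopologicalSpace.MetrizableSpace Z] [Nonempty Z] (Y : Set Z), IsClosed Y →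
        ∀ y₀ ∈ Y, (∃ U : Set Z, IsOpen U ∧ U ∩ Y = {y₀}) →
        ∀ Yn : ℕ → Set Z, (∀ n, IsClosed (Yn n)) → (∀ n, Yn (n + 1) ⊆ Yn n) →
          (⋂ n, Yn n) = Y →
          ∀ lam : Z → X, ContinuousOn lam Y → lam y₀ = x₀ →
            ∃ l : ℕ → Z → X,
              (∀ n, ContinuousOn (l n) (Yn n)) ∧
              (∀ n, l n y₀ = lam y₀) ∧
              ∀ ε > (0 : ℝ), ∃ N : ℕ, ∀ n ≥ N, ∀ y ∈ Y, dist (l n y) (lam y) ≤ ε :=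
  ⟨fun hX => hX.pointedApproxExtensionProperty x₀, PointedApproxExtensionProperty.isAANR⟩

/-- Let `(X, x₀)` be a pointed compactum.  Then `X` is an AANR if and only if the pointed
approximate extension property holds whenever the base point `y₀` is an isolated point of
the closed subset `Y` of the compactum `Z`: for every decreasing sequence `Y₁ ⊇ Y₂ ⊇ ⋯` of
closed subsets of `Z` with `⋂ n, Yₙ = Y` and every continuous `λ : Y → X` with `λ y₀ = x₀`,
there are continuous `λₙ : Yₙ → X` with `λₙ y₀ = λ y₀` for every `n` and `λₙ y → λ y`
uniformly over `y ∈ Y`. -/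
theorem isAANR_iff_pointed_extension_at_isolated_points
    (X : Type u) [MetricSpace X] [CompactSpace X] [Nonempty X] (x₀ : X) :
    IsAANR X ↔
      ∀ (Z : Type v) [TopologicalSpace Z] [CompactSpace Z]
        [TopologicalSpace.MetrizableSpace Z] [Nonempty Z] (Y : Set Z), IsClosed Y →
        ∀ y₀ ∈ Y, (∃ U : Set Z, IsOpen U ∧ U ∩ Y = {y₀}) →
        ∀ Yn : ℕ → Set Z, (∀ n, IsClosed (Yn n)) → (∀ n, Yn (n + 1) ⊆ Yn n) →
          (⋂ n, Yn n) = Y →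
          ∀ lam : Z → X, ContinuousOn lam Y → lam y₀ = x₀ →
            ∃ l : ℕ → Z → X,
              (∀ n, ContinuousOn (l n) (Yn n)) ∧
              (∀ n, l n y₀ = lam y₀) ∧
              ∀ ε > (0 : ℝ), ∃ N : ℕ, ∀ n ≥ N, ∀ y ∈ Y, dist (l n y) (lam y) ≤ ε :=
  isAANR_iff_pointed_extension_at_isolated_points_general X x₀
end

section
/- If A is a separable C*-algebra that is weakly projective, then A is weakly semiprojective. -/
universe u v

/-- A separable C*-algebra `A` is *weakly semiprojective* (WSP) if for every separable
C*-algebra `B` with an increasing sequence `J₁ ⊆ J₂ ⊆ ⋯` of closed two-sided ideals,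
`J` the closure of `⋃ n, Jₙ`, and every `*`-homomorphism `φ : A → B/J`, there is a sequence
of `*`-homomorphisms `ψₙ : A → B/Jₙ` with `πₙ (ψₙ a) → φ a` in norm for every `a ∈ A`,
where `πₙ : B/Jₙ → B/J` is the induced quotient map.

The quotients are encoded by surjective `*`-homomorphisms: `qₙ : B → Cₙ` plays the role of
the quotient map `B → B/Jₙ` (so `Jₙ = ker qₙ`), `p : B → D` plays the role of `B → B/J`
(so `J = ker p`), and `πₙ : Cₙ → D` is the induced map, determined by `πₙ ∘ qₙ = p`.
The ideal conditions become `ker qₙ ⊆ ker qₙ₊₁` and `ker p = closure (⋃ n, ker qₙ)`. -/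
def IsWSP (A : Type u) [NonUnitalNormedRing A] [StarRing A]
    [NormedSpace ℂ A] [IsScalarTower ℂ A A] [SMulCommClass ℂ A A] [StarModule ℂ A] :
    Prop :=
  ∀ (B : Type v) [NonUnitalNormedRing B] [StarRing B] [CStarRing B] [CompleteSpace B]
    [NormedSpace ℂ B] [IsScalarTower ℂ B B] [SMulCommClass ℂ B B] [StarModule ℂ B]
    [TopologicalSpace.SeparableSpace B]
    (C : ℕ → Type v) [∀ n, NonUnitalNormedRing (C n)] [∀ n, StarRing (C n)]
    [∀ n, CStarRing (C n)] [∀ n, CompleteSpace (C n)] [∀ n, NormedSpace ℂ (C n)]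
    [∀ n, IsScalarTower ℂ (C n) (C n)] [∀ n, SMulCommClass ℂ (C n) (C n)]
    [∀ n, StarModule ℂ (C n)]
    (D : Type v) [NonUnitalNormedRing D] [StarRing D] [CStarRing D] [CompleteSpace D]
    [NormedSpace ℂ D] [IsScalarTower ℂ D D] [SMulCommClass ℂ D D] [StarModule ℂ D]
    (q : ∀ n, B →⋆ₙₐ[ℂ] C n) (p : B →⋆ₙₐ[ℂ] D) (π : ∀ n, C n →⋆ₙₐ[ℂ] D),
    (∀ n, Function.Surjective (q n)) → Function.Surjective p →
    (∀ n, (π n).comp (q n) = p) →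
    (∀ n, {b : B | q n b = 0} ⊆ {b : B | q (n + 1) b = 0}) →
    {b : B | p b = 0} = closure (⋃ n, {b : B | q n b = 0}) →
    ∀ φ : A →⋆ₙₐ[ℂ] D,
      ∃ ψ : ∀ n, A →⋆ₙₐ[ℂ] C n,
        ∀ a : A,
          Filter.Tendsto (fun n => π n (ψ n a)) Filter.atTop (nhds (φ a))

/-- A separable C*-algebra `A` is *weakly projective* (WP) if for every separable
C*-algebra `B`, every closed two-sided ideal `J` of `B` (encoded by a surjective
`*`-homomorphism `p : B → D` playing the role of the quotient map `B → B/J`), every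
`*`-homomorphism `φ : A → B/J`, every finite subset `F ⊆ A` and every `ε > 0`, there is
a `*`-homomorphism `ψ : A → B` with `‖p (ψ a) - φ a‖ < ε` for all `a ∈ F`. -/
def IsWP (A : Type u) [NonUnitalNormedRing A] [StarRing A]
    [NormedSpace ℂ A] [IsScalarTower ℂ A A] [SMulCommClass ℂ A A] [StarModule ℂ A] :
    Prop :=
  ∀ (B : Type v) [NonUnitalNormedRing B] [StarRing B] [CStarRing B] [CompleteSpace B]
    [NormedSpace ℂ B] [IsScalarTower ℂ B B] [SMulCommClass ℂ B B] [StarModule ℂ B]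
    [TopologicalSpace.SeparableSpace B]
    (D : Type v) [NonUnitalNormedRing D] [StarRing D] [CStarRing D] [CompleteSpace D]
    [NormedSpace ℂ D] [IsScalarTower ℂ D D] [SMulCommClass ℂ D D] [StarModule ℂ D]
    (p : B →⋆ₙₐ[ℂ] D), Function.Surjective p →
    ∀ φ : A →⋆ₙₐ[ℂ] D, ∀ F : Finset A, ∀ ε > (0 : ℝ),
      ∃ ψ : A →⋆ₙₐ[ℂ] B, ∀ a ∈ F, ‖p (ψ a) - φ a‖ < ε

/-- If a separable C*-algebra `A` is weakly projective, then it is weakly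
semiprojective. -/
theorem isWSP_of_isWP
    (A : Type u) [NonUnitalNormedRing A] [StarRing A] [CStarRing A] [CompleteSpace A]
    [NormedSpace ℂ A] [IsScalarTower ℂ A A] [SMulCommClass ℂ A A] [StarModule ℂ A]
    [TopologicalSpace.SeparableSpace A] :
    IsWP.{u, v} A → IsWSP.{u, v} A := by
  intro hWP
  classical
  intro B _ _ _ _ _ _ _ _ _ C _ _ _ _ _ _ _ _ D _ _ _ _ _ _ _ _ q p pi hq hp hpi _ _ φ
  letI : NonUnitalCStarAlgebra A := {}
  letI : NonUnitalCStarAlgebra B := {}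
  letI : NonUnitalCStarAlgebra D := {}
  obtain ⟨u, hu⟩ := TopologicalSpace.exists_dense_seq A
  have H : ∀ n : ℕ, ∃ ψ : A →⋆ₙₐ[ℂ] B, ∀ a ∈ (Finset.range (n+1)).image u,
      ‖p (ψ a) - φ a‖ < 1/(n+1) := fun n =>
    hWP B D p hp φ _ (1/(n+1)) (by positivity)
  choose ψ' hψ' using H
  refine ⟨fun n => (q n).comp (ψ' n), fun a => ?_⟩
  rw [Metric.tendsto_atTop]
  intro ε hε
  obtain ⟨k, hk⟩ : ∃ k, ‖a - u k‖ < ε/4 := by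
    obtain ⟨k, hk⟩ := Metric.denseRange_iff.mp hu a (ε/4) (by positivity)
    exact ⟨k, by rwa [← dist_eq_norm]⟩
  obtain ⟨N, hN⟩ : ∃ N : ℕ, (1:ℝ)/(N+1) < ε/4 := exists_nat_one_div_lt (by positivity)
  refine ⟨max N k, fun n hn => ?_⟩
  have hkey : pi n ((q n) (ψ' n a)) = p (ψ' n a) := DFunLike.congr_fun (hpi n) (ψ' n a)
  have hmem : u k ∈ (Finset.range (n+1)).image u :=
    Finset.mem_image_of_mem u (Finset.mem_range.mpr
      (Nat.lt_succ_of_le (le_trans (le_max_right N k) hn)))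
  have h1 : ‖p (ψ' n a) - p (ψ' n (u k))‖ ≤ ‖a - u k‖ := by
    have := NonUnitalStarAlgHom.norm_apply_le (p.comp (ψ' n)) (a - u k)
    simpa [map_sub] using this
  have h2 : ‖p (ψ' n (u k)) - φ (u k)‖ < 1/(n+1) := hψ' n (u k) hmem
  have h3 : ‖φ (u k) - φ a‖ ≤ ‖a - u k‖ := by
    have := NonUnitalStarAlgHom.norm_apply_le φ (u k - a)
    calc ‖φ (u k) - φ a‖ = ‖φ (u k - a)‖ := by rw [map_sub]
      _ ≤ ‖u k - a‖ := this
      _ = ‖a - u k‖ := norm_sub_rev _ _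
  have h4 : (1:ℝ)/(n+1) ≤ 1/(N+1) := by
    apply one_div_le_one_div_of_le (by positivity)
    have : (N:ℝ) ≤ n := Nat.cast_le.mpr (le_trans (le_max_left N k) hn)
    linarith
  have hcomp : ((q n).comp (ψ' n)) a = q n (ψ' n a) := rfl
  rw [dist_eq_norm, hcomp, hkey]
  have tri : ‖p (ψ' n a) - φ a‖ ≤
      ‖p (ψ' n a) - p (ψ' n (u k))‖ + ‖p (ψ' n (u k)) - φ (u k)‖ + ‖φ (u k) - φ a‖ := by
    have h := norm_add₃_le (a := p (ψ' n a) - p (ψ' n (u k)))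
      (b := p (ψ' n (u k)) - φ (u k)) (c := φ (u k) - φ a)
    simpa using h
  linarith
end

section
/- Let A be a separable C*-algebra. Then A is WSP1 if and only if the following holds: for every unital C*-algebra B (not necessarily separable), every increasing sequence J₁ ⊆ J₂ ⊆ ⋯ of closed two-sided ideals of B with J the closure of ⋃ₙ Jₙ, and every *-homomorphism φ : A → B/J, there exists a sequence of *-homomorphisms ψₙ : A → B/Jₙ with πₙ(ψₙ(a)) → φ(a) in norm for every a ∈ A, where πₙ : B/Jₙ → B/J is the induced quotient map. -/
universe u v

open scoped CStarAlgebra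

section AuxSep

lemma aux_countable_submonoidClosure {M : Type*} [Monoid M] {s : Set M} (hs : s.Countable) :
    (Submonoid.closure s : Set M).Countable := by
  haveI := hs.to_subtype
  have h : (Submonoid.closure s : Set M) ⊆
      Set.range (fun l : List s => (l.map Subtype.val).prod) := by
    intro x hx
    obtain ⟨l, hl, rfl⟩ := Submonoid.exists_list_of_mem_closure hx
    refine ⟨l.attach.map fun y => (⟨y.1, hl y.1 y.2⟩ : s), ?_⟩
    simp [List.map_map, Function.comp_def]
  exact (Set.countable_range _).mono h

lemma aux_isSeparable_adjoin {B : Type*} [NormedRing B] [StarRing B] [NormedAlgebra ℂ B]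
    [StarModule ℂ B] [NormedStarGroup B] {s : Set B} (hs : s.Countable) :
    TopologicalSpace.IsSeparable ((StarAlgebra.adjoin ℂ s : StarSubalgebra ℂ B) : Set B) := by
  have h1 : ((StarAlgebra.adjoin ℂ s : StarSubalgebra ℂ B) : Set B)
      = ((Algebra.adjoin ℂ (s ∪ star s) : Subalgebra ℂ B) : Set B) := by
    rw [← StarAlgebra.adjoin_toSubalgebra]; rfl
  have h2 : ((Algebra.adjoin ℂ (s ∪ star s) : Subalgebra ℂ B) : Set B)
      = (Submodule.span ℂ ((Submonoid.closure (s ∪ star s) : Submonoid B) : Set B) : Set B) := by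
    have := Algebra.adjoin_eq_span (R := ℂ) (s := s ∪ star s) (A := B)
    exact congrArg (SetLike.coe) this |>.trans rfl
  rw [h1, h2]
  have hcs : (s ∪ star s).Countable := by
    refine hs.union ?_
    have : (star s : Set B) = star ⁻¹' s := rfl
    rw [this]
    exact hs.preimage star_injective
  exact (aux_countable_submonoidClosure hcs).isSeparable.span

end AuxSep

section CR
variable {X Y : Type*} [NonUnitalCStarAlgebra X] [NonUnitalCStarAlgebra Y]

lemma aux_trunc (f : X →⋆ₙₐ[ℂ] Y) {x : X} (hx : IsSelfAdjoint x) {δ : ℝ} (hδ : 0 < δ)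
    (hfx : ‖f x‖ ≤ δ) : ∃ z : X, IsSelfAdjoint z ∧ f z = f x ∧ ‖z‖ ≤ δ := by
  set tr : ℝ → ℝ := fun t => max (min t δ) (-δ) with htr
  have htrc : Continuous tr := (continuous_id.min continuous_const).max continuous_const
  have htr0 : tr 0 = 0 := by
    simp only [htr]
    rw [min_eq_left hδ.le, max_eq_left (by linarith)]
  have hfxsa : IsSelfAdjoint (f x) := hx.map f
  refine ⟨cfcₙ tr x, cfcₙ_predicate tr x, ?_, ?_⟩
  · have h1 : f (cfcₙ tr x) = cfcₙ tr (f x) :=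
      NonUnitalStarAlgHom.map_cfcₙ f tr x (hf := htrc.continuousOn) (hf₀ := htr0)
        (hφ := map_continuous f) (ha := hx) (hφa := hfxsa)
    rw [h1]
    conv_rhs => rw [← cfcₙ_id ℝ (f x)]
    apply cfcₙ_congr
    intro t ht
    have hbound : ‖t‖ ≤ ‖cfcₙ (id : ℝ → ℝ) (f x)‖ :=
      norm_apply_le_norm_cfcₙ (id : ℝ → ℝ) (f x) ht
    rw [cfcₙ_id ℝ (f x)] at hbound
    have habs : |t| ≤ δ := le_trans hbound hfx
    obtain ⟨h1', h2'⟩ := abs_le.mp habs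
    simp only [htr]
    rw [min_eq_left h2', max_eq_left h1']
    rfl
  · refine norm_cfcₙ_le fun t _ => ?_
    have : |tr t| ≤ δ := by
      rw [abs_le]
      constructor
      · exact le_max_right _ _
      · exact max_le (min_le_right _ _) (by linarith)
    simpa using this

lemma aux_closure_sub_mem (f : X →⋆ₙₐ[ℂ] Y) {y : Y} (hy : y ∈ closure (Set.range f)) (s : X) :
    y - f s ∈ closure (Set.range f) := by
  have hmap : (fun v => v - f s) '' (Set.range f) ⊆ Set.range f := by
    rintro - ⟨-, ⟨x', rfl⟩, rfl⟩
    exact ⟨x' - s, by simp [map_sub]⟩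
  have h1 : y - f s ∈ (fun v => v - f s) '' closure (Set.range f) := ⟨y, hy, rfl⟩
  have h2 := image_closure_subset_closure_image (f := fun v => v - f s)
    (s := Set.range f) (continuous_sub_right (f s))
  exact closure_mono hmap (h2 h1)

lemma aux_step (f : X →⋆ₙₐ[ℂ] Y) {w : Y} (hw : IsSelfAdjoint w)
    (hwc : w ∈ closure (Set.range f)) {η : ℝ} (hη : 0 < η) (hwn : ‖w‖ ≤ η) :
    ∃ z : X, IsSelfAdjoint z ∧ ‖z‖ ≤ 3 / 2 * η ∧ ‖w - f z‖ ≤ η / 2 := by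
  obtain ⟨v, ⟨x0, rfl⟩, hv⟩ := Metric.mem_closure_iff.mp hwc (η / 2) (by linarith)
  rw [dist_eq_norm] at hv
  set x : X := (2 : ℂ)⁻¹ • (x0 + star x0) with hxdef
  have hxsa : IsSelfAdjoint x := by
    rw [hxdef]
    unfold IsSelfAdjoint
    rw [star_smul, star_add, star_star]
    congr 1
    · simp
    · abel
  have hfx : f x = (2 : ℂ)⁻¹ • (f x0 + star (f x0)) := by
    rw [hxdef, map_smul, map_add, map_star]
  have hkey : w - f x = (2 : ℂ)⁻¹ • ((w - f x0) + star (w - f x0)) := by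
    rw [hfx, star_sub, hw.star_eq]
    module
  have hwfx : ‖w - f x‖ ≤ ‖w - f x0‖ := by
    rw [hkey, norm_smul]
    calc ‖(2:ℂ)⁻¹‖ * ‖(w - f x0) + star (w - f x0)‖
        ≤ ‖(2:ℂ)⁻¹‖ * (‖w - f x0‖ + ‖star (w - f x0)‖) := by
          gcongr; exact norm_add_le _ _
      _ = ‖w - f x0‖ := by rw [norm_star]; simp [norm_inv]; ring
  have hwfx' : ‖w - f x‖ ≤ η / 2 := le_trans hwfx hv.le
  have hfxn : ‖f x‖ ≤ 3 / 2 * η := by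
    have : ‖f x‖ ≤ ‖f x - w‖ + ‖w‖ := by simpa using norm_add_le (f x - w) w
    have h2 : ‖f x - w‖ = ‖w - f x‖ := norm_sub_rev _ _
    linarith
  obtain ⟨z, hzsa, hzfx, hzn⟩ := aux_trunc f hxsa (by linarith : (0:ℝ) < 3 / 2 * η) hfxn
  exact ⟨z, hzsa, hzn, by rwa [hzfx]⟩

lemma aux_selfadj_mem_range (f : X →⋆ₙₐ[ℂ] Y) {y : Y} (hy : y ∈ closure (Set.range f))
    (hysa : IsSelfAdjoint y) : y ∈ Set.range f := by
  set M : ℝ := ‖y‖ + 1 with hM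
  have hM0 : 0 < M := by positivity
  set P : ℕ → X → Prop := fun k s => IsSelfAdjoint s ∧ ‖y - f s‖ ≤ M / 2 ^ k with hP
  have hP0 : P 0 0 := by
    refine ⟨.zero X, ?_⟩
    simp only [map_zero, sub_zero, pow_zero, div_one]
    linarith [norm_nonneg y]
  have key : ∀ k (s : X), P k s → ∃ s', P (k + 1) s' ∧ ‖s' - s‖ ≤ 3 / 2 * (M / 2 ^ k) := by
    rintro k s ⟨hs, hsn⟩
    have hwsa : IsSelfAdjoint (y - f s) := hysa.sub (hs.map f)
    have hwc : y - f s ∈ closure (Set.range f) := aux_closure_sub_mem f hy s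
    have hpos : (0:ℝ) < M / 2 ^ k := by positivity
    obtain ⟨z, hzsa, hzn, hzd⟩ := aux_step f hwsa hwc hpos hsn
    refine ⟨s + z, ⟨hs.add hzsa, ?_⟩, by simpa using hzn⟩
    have h1 : y - f (s + z) = (y - f s) - f z := by rw [map_add]; abel
    rw [h1]
    calc ‖y - f s - f z‖ ≤ M / 2 ^ k / 2 := hzd
      _ = M / 2 ^ (k + 1) := by rw [pow_succ]; ring
  choose nxt hnxtP hnxtd using key
  let seq : ∀ k : ℕ, {s : X // P k s} := fun k =>
    Nat.rec ⟨0, hP0⟩ (fun k ih => ⟨nxt k ih.1 ih.2, hnxtP k ih.1 ih.2⟩) k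
  set s : ℕ → X := fun k => (seq k).1 with hs
  have hsP : ∀ k, P k (s k) := fun k => (seq k).2
  have hd : ∀ k, dist (s k) (s (k + 1)) ≤ (3 / 2 * M) * (1 / 2) ^ k := by
    intro k
    have h1 : s (k + 1) = nxt k (s k) (seq k).2 := rfl
    rw [dist_eq_norm, norm_sub_rev, h1]
    calc ‖nxt k (s k) (seq k).2 - s k‖ ≤ 3 / 2 * (M / 2 ^ k) := hnxtd k (s k) (seq k).2
      _ = (3 / 2 * M) * (1 / 2) ^ k := by rw [one_div, inv_pow]; ring
  have hcauchy : CauchySeq s := cauchySeq_of_le_geometric (1/2) (3/2*M) (by norm_num) hd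
  obtain ⟨x, hx⟩ := cauchySeq_tendsto_of_complete hcauchy
  refine ⟨x, ?_⟩
  have h1 : Filter.Tendsto (fun k => f (s k)) Filter.atTop (nhds (f x)) :=
    ((map_continuous f).tendsto x).comp hx
  have h2 : Filter.Tendsto (fun k => y - f (s k)) Filter.atTop (nhds 0) := by
    apply squeeze_zero_norm (fun k => (hsP k).2)
    have : Filter.Tendsto (fun k : ℕ => M * (1/2) ^ k) Filter.atTop (nhds (M * 0)) :=
      (tendsto_pow_atTop_nhds_zero_of_lt_one (by norm_num) (by norm_num)).const_mul M
    simpa [div_eq_mul_inv, inv_pow, one_div] using this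
  have h3 : Filter.Tendsto (fun k => f (s k)) Filter.atTop (nhds y) := by
    have := h2.const_sub y
    simpa using this
  exact tendsto_nhds_unique h1 h3

lemma aux_isClosed_range (f : X →⋆ₙₐ[ℂ] Y) : IsClosed (Set.range f) := by
  refine isClosed_of_closure_subset fun y hy => ?_
  set a : Y := (2 : ℂ)⁻¹ • (y + star y) with ha
  set b : Y := (2 : ℂ)⁻¹ • ((-Complex.I) • (y - star y)) with hb
  have hasa : IsSelfAdjoint a := by
    rw [ha]; unfold IsSelfAdjoint
    rw [star_smul, star_add, star_star]
    congr 1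
    · simp
    · abel
  have hbsa : IsSelfAdjoint b := by
    rw [hb]; unfold IsSelfAdjoint
    rw [star_smul, star_smul, star_sub, star_star]
    rw [show (star (-Complex.I) : ℂ) = Complex.I by simp,
      show (star (2:ℂ)⁻¹ : ℂ) = (2:ℂ)⁻¹ by simp]
    module
  have hmema : a ∈ closure (Set.range f) := by
    have hcont : Continuous (fun v : Y => (2 : ℂ)⁻¹ • (v + star v)) :=
      ((continuous_id.add continuous_star)).const_smul _
    have hmap : (fun v : Y => (2 : ℂ)⁻¹ • (v + star v)) '' (Set.range f) ⊆ Set.range f := by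
      rintro - ⟨-, ⟨x', rfl⟩, rfl⟩
      exact ⟨(2 : ℂ)⁻¹ • (x' + star x'), by rw [map_smul, map_add, map_star]⟩
    exact closure_mono hmap (image_closure_subset_closure_image hcont ⟨y, hy, rfl⟩)
  have hmemb : b ∈ closure (Set.range f) := by
    have hcont : Continuous (fun v : Y => (2 : ℂ)⁻¹ • ((-Complex.I) • (v - star v))) :=
      ((continuous_id.sub continuous_star).const_smul _).const_smul _
    have hmap : (fun v : Y => (2 : ℂ)⁻¹ • ((-Complex.I) • (v - star v))) '' (Set.range f)
        ⊆ Set.range f := by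
      rintro - ⟨-, ⟨x', rfl⟩, rfl⟩
      exact ⟨(2 : ℂ)⁻¹ • ((-Complex.I) • (x' - star x')),
        by rw [map_smul, map_smul, map_sub, map_star]⟩
    exact closure_mono hmap (image_closure_subset_closure_image hcont ⟨y, hy, rfl⟩)
  obtain ⟨xa, hxa⟩ := aux_selfadj_mem_range f hmema hasa
  obtain ⟨xb, hxb⟩ := aux_selfadj_mem_range f hmemb hbsa
  refine ⟨xa + Complex.I • xb, ?_⟩
  rw [map_add, map_smul, hxa, hxb, ha, hb]
  rw [smul_smul, smul_smul]
  rw [show Complex.I * (2:ℂ)⁻¹ * (-Complex.I) = (2:ℂ)⁻¹ by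
    linear_combination (-(2:ℂ)⁻¹) * Complex.I_sq]
  module

end CR


/-- A separable C*-algebra `A` is *weakly semiprojective with respect to unital
C*-algebras* (WSP1) if the approximate lifting property defining weak semiprojectivity
holds whenever `B` is a separable **unital** C*-algebra: for every increasing sequence
`J₁ ⊆ J₂ ⊆ ⋯` of closed two-sided ideals of `B` with `J` the closure of `⋃ n, Jₙ`, and
every (not necessarily unital) `*`-homomorphism `φ : A → B/J`, there is a sequence of
`*`-homomorphisms `ψₙ : A → B/Jₙ` with `πₙ (ψₙ a) → φ a` in norm for every `a ∈ A`.

The quotients are encoded by surjective `*`-homomorphisms: `qₙ : B → Cₙ` plays the role of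
the quotient map `B → B/Jₙ` (so `Jₙ = ker qₙ`), `p : B → D` plays the role of `B → B/J`
(so `J = ker p`), and `πₙ : Cₙ → D` is the induced map, determined by `πₙ ∘ qₙ = p`.
The ideal conditions become `ker qₙ ⊆ ker qₙ₊₁` and `ker p = closure (⋃ n, ker qₙ)`. -/
def IsWSP1 (A : Type u) [NonUnitalNormedRing A] [StarRing A]
    [NormedSpace ℂ A] [IsScalarTower ℂ A A] [SMulCommClass ℂ A A] [StarModule ℂ A] :
    Prop :=
  ∀ (B : Type v) [NormedRing B] [StarRing B] [CStarRing B] [CompleteSpace B]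
    [NormedAlgebra ℂ B] [StarModule ℂ B] [TopologicalSpace.SeparableSpace B]
    (C : ℕ → Type v) [∀ n, NonUnitalNormedRing (C n)] [∀ n, StarRing (C n)]
    [∀ n, CStarRing (C n)] [∀ n, CompleteSpace (C n)] [∀ n, NormedSpace ℂ (C n)]
    [∀ n, IsScalarTower ℂ (C n) (C n)] [∀ n, SMulCommClass ℂ (C n) (C n)]
    [∀ n, StarModule ℂ (C n)]
    (D : Type v) [NonUnitalNormedRing D] [StarRing D] [CStarRing D] [CompleteSpace D]
    [NormedSpace ℂ D] [IsScalarTower ℂ D D] [SMulCommClass ℂ D D] [StarModule ℂ D]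
    (q : ∀ n, B →⋆ₙₐ[ℂ] C n) (p : B →⋆ₙₐ[ℂ] D) (π : ∀ n, C n →⋆ₙₐ[ℂ] D),
    (∀ n, Function.Surjective (q n)) → Function.Surjective p →
    (∀ n, (π n).comp (q n) = p) →
    (∀ n, {b : B | q n b = 0} ⊆ {b : B | q (n + 1) b = 0}) →
    {b : B | p b = 0} = closure (⋃ n, {b : B | q n b = 0}) →
    ∀ φ : A →⋆ₙₐ[ℂ] D,
      ∃ ψ : ∀ n, A →⋆ₙₐ[ℂ] C n,
        ∀ a : A,
          Filter.Tendsto (fun n => π n (ψ n a)) Filter.atTop (nhds (φ a))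

/-- A separable C*-algebra `A` is WSP1 if and only if the defining approximate lifting
property holds for every unital C*-algebra `B`, not necessarily separable. -/
theorem isWSP1_iff_lifting_over_all_unital
    (A : Type u) [NonUnitalNormedRing A] [StarRing A] [CStarRing A] [CompleteSpace A]
    [NormedSpace ℂ A] [IsScalarTower ℂ A A] [SMulCommClass ℂ A A] [StarModule ℂ A]
    [TopologicalSpace.SeparableSpace A] :
    IsWSP1.{u, v} A ↔
      ∀ (B : Type v) [NormedRing B] [StarRing B] [CStarRing B] [CompleteSpace B]
        [NormedAlgebra ℂ B] [StarModule ℂ B]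
        (C : ℕ → Type v) [∀ n, NonUnitalNormedRing (C n)] [∀ n, StarRing (C n)]
        [∀ n, CStarRing (C n)] [∀ n, CompleteSpace (C n)] [∀ n, NormedSpace ℂ (C n)]
        [∀ n, IsScalarTower ℂ (C n) (C n)] [∀ n, SMulCommClass ℂ (C n) (C n)]
        [∀ n, StarModule ℂ (C n)]
        (D : Type v) [NonUnitalNormedRing D] [StarRing D] [CStarRing D] [CompleteSpace D]
        [NormedSpace ℂ D] [IsScalarTower ℂ D D] [SMulCommClass ℂ D D] [StarModule ℂ D]
        (q : ∀ n, B →⋆ₙₐ[ℂ] C n) (p : B →⋆ₙₐ[ℂ] D) (π : ∀ n, C n →⋆ₙₐ[ℂ] D),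
        (∀ n, Function.Surjective (q n)) → Function.Surjective p →
        (∀ n, (π n).comp (q n) = p) →
        (∀ n, {b : B | q n b = 0} ⊆ {b : B | q (n + 1) b = 0}) →
        {b : B | p b = 0} = closure (⋃ n, {b : B | q n b = 0}) →
        ∀ φ : A →⋆ₙₐ[ℂ] D,
          ∃ ψ : ∀ n, A →⋆ₙₐ[ℂ] C n,
            ∀ a : A,
              Filter.Tendsto (fun n => π n (ψ n a)) Filter.atTop (nhds (φ a)) := by
  constructor
  · intro hA
    intro B _ _ _ _ _ _ C _ _ _ _ _ _ _ _ D _ _ _ _ _ _ _ _ q p π hqsurj hpsurj hcomp hker hkerp φ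
    classical
    letI : CStarAlgebra B := {}
    letI : ∀ n, NonUnitalCStarAlgebra (C n) := fun n => {}
    letI : NonUnitalCStarAlgebra D := {}
    letI : NonUnitalCStarAlgebra A := {}
    haveI : Nonempty A := ⟨0⟩
    set u : ℕ → A := TopologicalSpace.denseSeq A with hu
    have hudense : DenseRange u := TopologicalSpace.denseRange_denseSeq A
    set K : Set B := ⋃ n, {b : B | q n b = 0} with hKdef
    have hKne : K.Nonempty := ⟨0, Set.mem_iUnion.mpr ⟨0, map_zero (q 0)⟩⟩
    have hccE : ∀ (d : B) (m : ℕ), ∃ c, c ∈ K ∧ dist d c < Metric.infDist d K + 1/(m+1) := by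
      intro d m
      have hpos : (0:ℝ) < 1/(m+1) := by positivity
      exact (Metric.infDist_lt_iff hKne).mp (lt_add_of_pos_right _ hpos)
    choose cc hccK hccd using hccE
    have hsepch : ∀ T : Set B, T.Countable → ∃ Wt : Set B, Wt.Countable ∧
        ((StarAlgebra.adjoin ℂ T : StarSubalgebra ℂ B) : Set B) ⊆ closure Wt :=
      fun T hT => aux_isSeparable_adjoin hT
    choose W hWc hWsub using hsepch
    let T : ℕ → {s : Set B // s.Countable} := fun k => Nat.rec
      (⟨Set.range (fun i => Function.surjInv hpsurj (φ (u i))), Set.countable_range _⟩ :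
        {s : Set B // s.Countable})
      (fun _ Tk => ⟨Tk.1 ∪ (W Tk.1 Tk.2 ∪ Set.image2 cc (W Tk.1 Tk.2) Set.univ),
        Tk.2.union ((hWc Tk.1 Tk.2).union ((hWc Tk.1 Tk.2).image2
          (Set.countable_univ) cc))⟩) k
    set genSet : Set B := ⋃ k, (T k).1 with hgen
    have hgenc : genSet.Countable := Set.countable_iUnion fun k => (T k).2
    set S : StarSubalgebra ℂ B := (StarAlgebra.adjoin ℂ genSet).topologicalClosure with hSdef
    haveI hSclosed : IsClosed (S : Set B) := StarSubalgebra.isClosed_topologicalClosure _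
    have hcoeS : (S : Set B) = closure ((StarAlgebra.adjoin ℂ genSet :
        StarSubalgebra ℂ B) : Set B) := StarSubalgebra.topologicalClosure_coe _
    haveI hsepS : TopologicalSpace.SeparableSpace S := by
      have h2 : TopologicalSpace.IsSeparable (S : Set B) := by
        rw [hcoeS]
        exact (aux_isSeparable_adjoin hgenc).closure
      exact h2.separableSpace
    have hgenS : genSet ⊆ (S : Set B) :=
      (StarAlgebra.subset_adjoin (R := ℂ) genSet).trans
        (StarSubalgebra.le_topologicalClosure _)
    -- density of the union of the W's
    set Winf : Set B := ⋃ k, W (T k).1 (T k).2 with hWinf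
    have hSW : (S : Set B) ⊆ closure Winf := by
      have hTmono : ∀ k, (T k).1 ⊆ (T (k+1)).1 := fun k => Set.subset_union_left
      have hTmono' : Monotone (fun k => (T k).1) := monotone_nat_of_le_succ hTmono
      set g : ℕ → Set B := fun k => (T k).1 ∪ star (T k).1 with hg
      have hgmono : Monotone g := by
        intro i j hij x hx
        rcases hx with hx | hx
        · exact Or.inl (hTmono' hij hx)
        · refine Or.inr ?_
          rw [Set.mem_star] at hx ⊢
          exact hTmono' hij hx
      have hstarU : star genSet = ⋃ k, star (T k).1 := by
        ext x
        simp only [Set.mem_star, Set.mem_iUnion, hgen]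
      have hUnion : genSet ∪ star genSet = ⋃ k, g k := by
        rw [hgen, hstarU, hg, ← Set.iUnion_union_distrib]
      have hcoeS0 : ((StarAlgebra.adjoin ℂ genSet : StarSubalgebra ℂ B) : Set B)
          = ((Algebra.adjoin ℂ (genSet ∪ star genSet) : Subalgebra ℂ B) : Set B) := by
        rw [← StarAlgebra.adjoin_toSubalgebra]; rfl
      have hadjU : (Algebra.adjoin ℂ (genSet ∪ star genSet) : Subalgebra ℂ B)
          = ⨆ k, Algebra.adjoin ℂ (g k) := by
        rw [hUnion, Algebra.adjoin_iUnion]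
      have hdir : Directed (· ≤ ·) (fun k => (Algebra.adjoin ℂ (g k) : Subalgebra ℂ B)) :=
        (Monotone.directed_le fun i j hij => Algebra.adjoin_mono (hgmono hij))
      have hS0W : ((StarAlgebra.adjoin ℂ genSet : StarSubalgebra ℂ B) : Set B)
          ⊆ closure Winf := by
        rw [hcoeS0, hadjU, Subalgebra.coe_iSup_of_directed hdir]
        refine Set.iUnion_subset fun k => ?_
        have h1 : ((Algebra.adjoin ℂ (g k) : Subalgebra ℂ B) : Set B)
            = ((StarAlgebra.adjoin ℂ (T k).1 : StarSubalgebra ℂ B) : Set B) := by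
          rw [← StarAlgebra.adjoin_toSubalgebra]; rfl
        rw [h1]
        exact (hWsub (T k).1 (T k).2).trans
          (closure_mono (Set.subset_iUnion (fun j => W (T j).1 (T j).2) k))
      rw [hcoeS]
      exact closure_minimal hS0W isClosed_closure
    -- the homomorphisms
    let inclS : S →⋆ₙₐ[ℂ] B := (StarSubalgebra.subtype S).toNonUnitalStarAlgHom
    let qS : ∀ n, ↥S →⋆ₙₐ[ℂ] C n := fun n => (q n).comp inclS
    let pS : ↥S →⋆ₙₐ[ℂ] D := p.comp inclS
    let Sn : ∀ n, NonUnitalStarSubalgebra ℂ (C n) := fun n => NonUnitalStarAlgHom.range (qS n)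
    let SD : NonUnitalStarSubalgebra ℂ D := NonUnitalStarAlgHom.range pS
    haveI hSnclosed : ∀ n, IsClosed ((Sn n : Set (C n))) := by
      intro n
      have h1 : (Sn n : Set (C n)) = Set.range (qS n) := NonUnitalStarAlgHom.coe_range _
      rw [h1]
      exact aux_isClosed_range (qS n)
    haveI hSDclosed : IsClosed (SD : Set D) := by
      have h1 : (SD : Set D) = Set.range pS := NonUnitalStarAlgHom.coe_range _
      rw [h1]
      exact aux_isClosed_range pS
    let q' : ∀ n, ↥S →⋆ₙₐ[ℂ] ↥(Sn n) := fun n => NonUnitalStarAlgHom.rangeRestrict (qS n)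
    let p' : ↥S →⋆ₙₐ[ℂ] ↥SD := NonUnitalStarAlgHom.rangeRestrict pS
    have hq'surj : ∀ n, Function.Surjective (q' n) := by
      rintro n ⟨y, hy⟩
      obtain ⟨x, hx⟩ := (NonUnitalStarAlgHom.mem_range _).mp hy
      exact ⟨x, Subtype.ext hx⟩
    have hp'surj : Function.Surjective p' := by
      rintro ⟨y, hy⟩
      obtain ⟨x, hx⟩ := (NonUnitalStarAlgHom.mem_range _).mp hy
      exact ⟨x, Subtype.ext hx⟩
    let π' : ∀ n, ↥(Sn n) →⋆ₙₐ[ℂ] ↥SD := fun n =>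
      NonUnitalStarAlgHom.codRestrict
        ((π n).comp (NonUnitalStarSubalgebraClass.subtype (Sn n))) SD
        (by
          rintro ⟨y, hy⟩
          obtain ⟨x, hx⟩ := (NonUnitalStarAlgHom.mem_range _).mp hy
          rw [NonUnitalStarAlgHom.mem_range]
          refine ⟨x, ?_⟩
          have h1 : π n (q n (x : B)) = p (x : B) := DFunLike.congr_fun (hcomp n) (x : B)
          show p (x : B) = π n y
          rw [← hx]
          exact h1.symm)
    have hcomp' : ∀ n, (π' n).comp (q' n) = p' := by
      intro n
      ext x
      show π n (q n (x : B)) = p (x : B)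
      exact DFunLike.congr_fun (hcomp n) (x : B)
    have hq'zero : ∀ n (x : ↥S), q' n x = 0 ↔ q n (x : B) = 0 := by
      intro n x
      rw [← Subtype.coe_inj]
      show (q n (x : B) = _) ↔ _
      rw [ZeroMemClass.coe_zero]
    have hp'zero : ∀ x : ↥S, p' x = 0 ↔ p (x : B) = 0 := by
      intro x
      rw [← Subtype.coe_inj]
      show (p (x : B) = _) ↔ _
      rw [ZeroMemClass.coe_zero]
    have hker' : ∀ n, {x : ↥S | q' n x = 0} ⊆ {x : ↥S | q' (n+1) x = 0} := by
      intro n x hx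
      rw [Set.mem_setOf_eq, hq'zero] at hx ⊢
      exact hker n hx
    have hkerp' : {x : ↥S | p' x = 0} = closure (⋃ n, {x : ↥S | q' n x = 0}) := by
      apply Set.Subset.antisymm
      · intro x hx
        rw [Set.mem_setOf_eq, hp'zero] at hx
        have hxk : (x : B) ∈ closure K := by
          have h1 : (x : B) ∈ {b : B | p b = 0} := hx
          rwa [hkerp] at h1
        rw [Metric.mem_closure_iff]
        intro ε hε
        have hε3 : (0:ℝ) < ε/3 := by linarith
        obtain ⟨d, hdW, hdd⟩ := Metric.mem_closure_iff.mp (hSW x.2) (ε/3) hε3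
        obtain ⟨k, hdk⟩ := Set.mem_iUnion.mp hdW
        obtain ⟨m, hm⟩ := exists_nat_one_div_lt hε3
        have hcmem : cc d m ∈ (T (k+1)).1 :=
          Set.mem_union_right _ (Set.mem_union_right _
            (Set.mem_image2_of_mem hdk (Set.mem_univ m)))
        have hcS : cc d m ∈ S := hgenS (Set.mem_iUnion.mpr ⟨k+1, hcmem⟩)
        have hdist : dist (x : B) (cc d m) < ε := by
          have h1 : Metric.infDist d K ≤ dist d (x : B) := by
            rw [← Metric.infDist_closure]
            exact Metric.infDist_le_dist_of_mem hxk
          have h2 := hccd d m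
          calc dist (x : B) (cc d m) ≤ dist (x : B) d + dist d (cc d m) := dist_triangle _ _ _
            _ < ε/3 + (Metric.infDist d K + 1/(m+1)) := by
                have := add_lt_add_of_lt_of_le h2 (le_refl (0:ℝ))
                gcongr
            _ ≤ ε/3 + (dist d (x : B) + 1/(m+1)) := by gcongr
            _ ≤ ε/3 + (ε/3 + ε/3) := by
                rw [dist_comm d (x : B)]
                gcongr <;> linarith
            _ = ε := by ring
        obtain ⟨n, hn⟩ := Set.mem_iUnion.mp (hccK d m)
        refine ⟨⟨cc d m, hcS⟩, Set.mem_iUnion.mpr ⟨n, ?_⟩, ?_⟩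
        · rw [Set.mem_setOf_eq, hq'zero]
          exact hn
        · rwa [Subtype.dist_eq]
      · have hsub : (⋃ n, {x : ↥S | q' n x = 0}) ⊆ {x : ↥S | p' x = 0} := by
          intro x hx
          obtain ⟨n, hn⟩ := Set.mem_iUnion.mp hx
          rw [Set.mem_setOf_eq, hq'zero] at hn
          have h2 : (x : B) ∈ closure K := subset_closure (Set.mem_iUnion.mpr ⟨n, hn⟩)
          rw [← hkerp] at h2
          rw [Set.mem_setOf_eq, hp'zero]
          exact h2
        have hclosed : IsClosed {x : ↥S | p' x = 0} := by
          have hc : Continuous fun x : ↥S => p (x : B) :=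
            (map_continuous p).comp continuous_subtype_val
          have h1 : {x : ↥S | p' x = 0} = (fun x : ↥S => p (x : B)) ⁻¹' {0} := by
            ext x
            simp only [Set.mem_setOf_eq, Set.mem_preimage, Set.mem_singleton_iff, hp'zero]
          rw [h1]
          exact IsClosed.preimage hc isClosed_singleton
        exact closure_minimal hsub hclosed
    have hφmem : ∀ a : A, φ a ∈ SD := by
      have hrange : Set.range (fun i => φ (u i)) ⊆ (SD : Set D) := by
        rintro - ⟨i, rfl⟩
        have hb0 : Function.surjInv hpsurj (φ (u i)) ∈ S := by
          apply hgenS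
          refine Set.mem_iUnion.mpr ⟨0, ?_⟩
          exact ⟨i, rfl⟩
        show φ (u i) ∈ SD
        rw [NonUnitalStarAlgHom.mem_range]
        exact ⟨⟨_, hb0⟩, Function.surjInv_eq hpsurj _⟩
      intro a
      have hφcont : Continuous φ := map_continuous φ
      have h1 : φ a ∈ closure (φ '' Set.range u) := by
        have h2 : a ∈ closure (Set.range u) := hudense a
        exact image_closure_subset_closure_image hφcont ⟨a, h2, rfl⟩
      have h3 : φ '' Set.range u = Set.range (fun i => φ (u i)) := by
        rw [← Set.range_comp]
        rfl
      rw [h3] at h1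
      have h4 := (closure_mono hrange) h1
      rwa [hSDclosed.closure_eq] at h4
    let φ' : A →⋆ₙₐ[ℂ] ↥SD := NonUnitalStarAlgHom.codRestrict φ SD hφmem
    obtain ⟨ψ', hψ'⟩ := hA ↥S (fun n => ↥(Sn n)) ↥SD q' p' π' hq'surj hp'surj hcomp'
      hker' hkerp' φ'
    refine ⟨fun n => (NonUnitalStarSubalgebraClass.subtype (Sn n)).comp (ψ' n), fun a => ?_⟩
    have h2 : Filter.Tendsto (fun n => ((π' n) (ψ' n a) : D)) Filter.atTop
        (nhds ((φ' a : D))) := (continuous_subtype_val.tendsto _).comp (hψ' a)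
    exact h2
  · intro h
    unfold IsWSP1
    intro B _ _ _ _ _ _ _ C _ _ _ _ _ _ _ _ D _ _ _ _ _ _ _ _ q p π h1 h2 h3 h4 h5 φ
    exact h B C D q p π h1 h2 h3 h4 h5 φ
end

section
/- Let A be a separable C*-algebra. Then A is WSP1 if and only if its unitization Ã is weakly semiprojective. -/
/-!
If `Ã` is WSP and `B` is unital, a map `φ : A → B ⧸ J` extends to `Ã` by sending the unit to
the unit of `B ⧸ J`; restricting approximate lifts of the extension to `A` lifts `φ`.

Conversely, `h = φ 1` is a projection of `B ⧸ J`. A self-adjoint preimage of `h` in `B` is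
almost idempotent in some `B ⧸ J_{n₀}`, and functional calculus turns its image there into a
projection `e` lifting `h`. The corners cut out by `e` and its images form a chain of quotients of
the unital C⋆-algebra `e (B ⧸ J_{n₀}) e` with limit `h (B ⧸ J) h`, which contains the range of
`φ`. WSP1 lifts `φ|A` along this chain, and sending the unit to the image of `e` extends the lifts
to `Ã`.
-/

universe u v

open Filter Topology
open scoped CStarAlgebra

noncomputable def projCutoff (t : ℝ) : ℝ := min 1 (max 0 (2 * t - 2⁻¹))

lemma continuous_projCutoff : Continuous projCutoff := by
  unfold projCutoff; fun_prop

lemma projCutoff_zero : projCutoff 0 = 0 := by norm_num [projCutoff]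

lemma projCutoff_of_le {t : ℝ} (h : t ≤ 4⁻¹) : projCutoff t = 0 := by
  simp [projCutoff, max_eq_left (by linarith : 2 * t - 2⁻¹ ≤ 0)]

lemma projCutoff_of_ge {t : ℝ} (h : 3 / 4 ≤ t) : projCutoff t = 1 := by
  simp [projCutoff, max_eq_right (by linarith : (0 : ℝ) ≤ 2 * t - 2⁻¹),
    min_eq_left (by linarith : (1 : ℝ) ≤ 2 * t - 2⁻¹)]

section ProjectionLift

variable {X : Type*} [NonUnitalCStarAlgebra X]

/-- `t * (1 - t) > 3/16` for `1/4 < t < 3/4`. -/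
lemma mem_quasispectrum_le_or_ge_of_norm_mul_self_sub_lt {y : X} (hy : IsSelfAdjoint y)
    (h : ‖y * y - y‖ < 3 / 16) {t : ℝ} (ht : t ∈ quasispectrum ℝ y) : t ≤ 4⁻¹ ∨ 3 / 4 ≤ t := by
  have hle : ‖t * t - t‖ ≤ ‖y * y - y‖ := by
    have := norm_apply_le_norm_cfcₙ (fun s : ℝ ↦ s * s - s) y ht
    rwa [cfcₙ_sub _ _ y, cfcₙ_mul _ _ y, cfcₙ_id' ℝ y] at this
  rw [Real.norm_eq_abs, abs_le] at hle
  by_contra! hmid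
  nlinarith [mul_pos (sub_pos.mpr hmid.1) (sub_pos.mpr hmid.2)]

lemma isStarProjection_cfcₙ_projCutoff {y : X} (hy : IsSelfAdjoint y)
    (h : ‖y * y - y‖ < 3 / 16) : IsStarProjection (cfcₙ projCutoff y) := by
  refine isStarProjection_iff_quasispectrum_subset_and_isSelfAdjoint.mpr
    ⟨?_, cfcₙ_predicate projCutoff y⟩
  rw [cfcₙ_map_quasispectrum projCutoff y continuous_projCutoff.continuousOn projCutoff_zero]
  rintro _ ⟨t, ht, rfl⟩
  rcases mem_quasispectrum_le_or_ge_of_norm_mul_self_sub_lt hy h ht with ht' | ht'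
  · simp [projCutoff_of_le ht']
  · simp [projCutoff_of_ge ht']

lemma IsStarProjection.cfcₙ_projCutoff {e : X} (he : IsStarProjection e) :
    cfcₙ projCutoff e = e := by
  have hσ := (isStarProjection_iff_quasispectrum_subset_and_isSelfAdjoint.mp he).1
  rw [cfcₙ_congr (g := id) fun t ht ↦ ?_, cfcₙ_id ℝ e]
  rcases hσ ht with rfl | rfl
  · exact projCutoff_zero
  · exact projCutoff_of_ge (by norm_num)

end ProjectionLift

section Corner

variable (R : Type*) {X Y : Type*} [CommSemiring R]
  [NonUnitalSemiring X] [StarRing X] [Module R X] [IsScalarTower R X X] [SMulCommClass R X X]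
  [NonUnitalSemiring Y] [StarRing Y] [Module R Y] [IsScalarTower R Y Y] [SMulCommClass R Y Y]

def corner (e : X) (he : IsSelfAdjoint e) : NonUnitalStarSubalgebra R X where
  carrier := {x | e * x = x ∧ x * e = x}
  add_mem' hx hy := ⟨by rw [mul_add, hx.1, hy.1], by rw [add_mul, hx.2, hy.2]⟩
  zero_mem' := ⟨mul_zero e, zero_mul e⟩
  mul_mem' hx hy := ⟨by rw [← mul_assoc, hx.1], by rw [mul_assoc, hy.2]⟩
  smul_mem' c x hx := ⟨by rw [mul_smul_comm, hx.1], by rw [smul_mul_assoc, hx.2]⟩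
  star_mem' hx := ⟨by rw [← he.star_eq, ← star_mul, hx.2], by rw [← he.star_eq, ← star_mul, hx.1]⟩

variable {R}

lemma mem_corner {e x : X} {he : IsSelfAdjoint e} :
    x ∈ corner R e he ↔ e * x = x ∧ x * e = x := Iff.rfl

lemma IsStarProjection.mul_mul_mem_corner {e : X} (he : IsStarProjection e) (x : X) :
    e * x * e ∈ corner R e he.isSelfAdjoint :=
  ⟨by rw [← mul_assoc, ← mul_assoc, he.isIdempotentElem.eq],
    by rw [mul_assoc, mul_assoc, he.isIdempotentElem.eq, ← mul_assoc]⟩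

lemma map_mem_corner {F : Type*} [FunLike F X Y] [MulHomClass F X Y] [StarHomClass F X Y]
    (ρ : F) {e x : X} {he : IsSelfAdjoint e} (hx : x ∈ corner R e he) :
    ρ x ∈ corner R (ρ e) (he.map ρ) :=
  ⟨by rw [← map_mul, hx.1], by rw [← map_mul, hx.2]⟩

instance isClosed_corner [TopologicalSpace X] [ContinuousMul X] [T2Space X] (e : X)
    (he : IsSelfAdjoint e) : IsClosed (corner R e he : Set X) :=
  (isClosed_eq (continuous_const.mul continuous_id) continuous_id).inter
    (isClosed_eq (continuous_id.mul continuous_const) continuous_id)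

/-- `g` need only equal `ρ e` propositionally, so that all the maps `π n` of a tower can land in
the same corner at `p e`. -/
def cornerMap (ρ : X →⋆ₙₐ[R] Y) {e : X} (he : IsSelfAdjoint e) {g : Y} (hg : ρ e = g) :
    corner R e he →⋆ₙₐ[R] corner R g (hg ▸ he.map ρ) :=
  NonUnitalStarAlgHom.codRestrict (ρ.comp (NonUnitalStarSubalgebraClass.subtype _)) _ fun x ↦ by
    subst hg; exact map_mem_corner ρ x.2

@[simp]
lemma coe_cornerMap_apply (ρ : X →⋆ₙₐ[R] Y) {e : X} (he : IsSelfAdjoint e) {g : Y}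
    (hg : ρ e = g) (x : corner R e he) : (cornerMap ρ he hg x : Y) = ρ x := rfl

lemma cornerMap_surjective {ρ : X →⋆ₙₐ[R] Y} (hρ : Function.Surjective ρ) {e : X}
    (he : IsStarProjection e) {g : Y} (hg : ρ e = g) :
    Function.Surjective (cornerMap ρ he.isSelfAdjoint hg) := by
  rintro ⟨y, hy⟩
  obtain ⟨x, rfl⟩ := hρ y
  refine ⟨⟨e * x * e, he.mul_mul_mem_corner x⟩, Subtype.ext ?_⟩
  simp only [coe_cornerMap_apply, map_mul, hg, hy.1, hy.2]

end Corner

noncomputable abbrev IsStarProjection.cornerCStarAlgebra {X : Type*} [NonUnitalCStarAlgebra X]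
    {e : X} (he : IsStarProjection e) : CStarAlgebra (corner ℂ e he.isSelfAdjoint) :=
  letI : NormedRing (corner ℂ e he.isSelfAdjoint) :=
    { (inferInstance : NonUnitalNormedRing (corner ℂ e he.isSelfAdjoint)) with
      one := ⟨e, he.isIdempotentElem.eq, he.isIdempotentElem.eq⟩
      one_mul := fun x ↦ Subtype.ext x.2.1
      mul_one := fun x ↦ Subtype.ext x.2.2 }
  { (inferInstance : NormedRing (corner ℂ e he.isSelfAdjoint)),
    Algebra.ofModule (R := ℂ) (A := corner ℂ e he.isSelfAdjoint) smul_mul_assoc mul_smul_comm,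
    (inferInstance : NonUnitalCStarAlgebra (corner ℂ e he.isSelfAdjoint)) with
    norm_smul_le := norm_smul_le }

namespace Unitization

variable {R A X : Type*} [CommSemiring R] [NonUnitalSemiring A] [Module R A]
  [NonUnitalSemiring X] [Module R X]

lemma map_eq_map_inr_add_smul_map_one [IsScalarTower R A A] [SMulCommClass R A A] {F : Type*}
    [FunLike F (Unitization R A) X] [NonUnitalAlgHomClass F R (Unitization R A) X] (φ : F)
    (x : Unitization R A) : φ x = φ x.snd + x.fst • φ 1 := by
  conv_lhs => rw [← inl_fst_add_inr_snd_eq x, ← algebraMap_eq_inl, Algebra.algebraMap_eq_smul_one]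
  rw [map_add, map_smul, add_comm]

variable [StarRing R] [StarRing A] [StarRing X] [StarModule R X]
  [IsScalarTower R X X] [SMulCommClass R X X]

def cornerLift (ψ : A →⋆ₙₐ[R] X) {e : X} (he : IsStarProjection e)
    (hψ : ∀ a, e * ψ a = ψ a) : Unitization R A →⋆ₙₐ[R] X where
  toFun x := ψ x.snd + x.fst • e
  map_add' x y := by
    simp only [snd_add, fst_add, map_add, add_smul]
    abel
  map_zero' := by simp
  map_mul' x y := by
    have hψe (a : A) : ψ a * e = ψ a := by
      have := congrArg star (hψ (star a))
      rwa [star_mul, ← map_star, star_star, he.isSelfAdjoint.star_eq] at this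
    simp only [snd_mul, fst_mul, map_add, map_smul, map_mul, mul_add, add_mul, smul_add,
      smul_mul_assoc, mul_smul_comm, smul_smul, hψ, hψe, he.isIdempotentElem.eq, mul_comm x.fst]
    abel
  map_smul' c x := by simp [smul_add, smul_smul]
  map_star' x := by
    simp only [snd_star, fst_star, map_star, star_add, star_smul, he.isSelfAdjoint.star_eq]

@[simp]
lemma cornerLift_apply (ψ : A →⋆ₙₐ[R] X) {e : X} (he : IsStarProjection e)
    (hψ : ∀ a, e * ψ a = ψ a) (x : Unitization R A) :
    cornerLift ψ he hψ x = ψ x.snd + x.fst • e := rfl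

end Unitization

lemma NonUnitalStarAlgHom.exists_comp_eq_of_surjective {R X Y Z : Type*} [CommSemiring R]
    [NonUnitalRing X] [Module R X] [Star X] [NonUnitalRing Y] [Module R Y] [Star Y]
    [NonUnitalRing Z] [Module R Z] [Star Z] {f : X →⋆ₙₐ[R] Y} (hf : Function.Surjective f)
    (g : X →⋆ₙₐ[R] Z) (hfg : ∀ x, f x = 0 → g x = 0) : ∃ r : Y →⋆ₙₐ[R] Z, r.comp f = g := by
  have key (x x' : X) (h : f x = f x') : g x = g x' := by
    rw [← sub_eq_zero, ← map_sub]
    exact hfg _ (by rw [map_sub, h, sub_self])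
  have hs := Function.surjInv_eq hf
  refine ⟨{ toFun := fun y ↦ g (Function.surjInv hf y)
            map_add' := fun y y' ↦ by rw [← map_add]; exact key _ _ (by simp [hs])
            map_zero' := by rw [← map_zero g]; exact key _ _ (by simp [hs])
            map_mul' := fun y y' ↦ by rw [← map_mul]; exact key _ _ (by simp [hs])
            map_smul' := fun c y ↦ by
              rw [MonoidHom.id_apply, ← map_smul]; exact key _ _ (by simp [hs])
            map_star' := fun y ↦ by rw [← map_star]; exact key _ _ (by simp [map_star, hs]) }, ?_⟩
  ext x
  exact key _ _ (hs (f x))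

lemma exists_pi_add_eq {F : ℕ → Type*} [∀ n, Inhabited (F n)] (n₀ : ℕ) (θ : ∀ k, F (k + n₀)) :
    ∃ ψ : ∀ n, F n, ∀ k, ψ (k + n₀) = θ k := by
  refine ⟨fun n ↦ if h : n₀ ≤ n then Nat.sub_add_cancel h ▸ θ (n - n₀) else default, fun k ↦ ?_⟩
  have (m : ℕ) (hm : m = k) (h : m + n₀ = k + n₀) : h ▸ θ m = θ k := by subst hm; rfl
  simpa using this _ (by omega) _

section QuotientTower

variable {B D : Type*} {C : ℕ → Type*} [NonUnitalCStarAlgebra B]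
  [∀ n, NonUnitalCStarAlgebra (C n)] [NonUnitalCStarAlgebra D]

/-- The maps `B → B ⧸ Jₙ` and `B ⧸ Jₙ → B ⧸ J` for an increasing chain of closed ideals `Jₙ`
and the closure `J` of their union, presented as in `IsWSP`. -/
structure IsQuotientTower (q : ∀ n, B →⋆ₙₐ[ℂ] C n) (p : B →⋆ₙₐ[ℂ] D)
    (π : ∀ n, C n →⋆ₙₐ[ℂ] D) : Prop where
  surjective_q : ∀ n, Function.Surjective (q n)
  surjective_p : Function.Surjective p
  comp_q : ∀ n, (π n).comp (q n) = p
  ker_q_subset : ∀ n, {b | q n b = 0} ⊆ {b | q (n + 1) b = 0}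
  ker_p_eq : {b | p b = 0} = closure (⋃ n, {b | q n b = 0})

namespace IsQuotientTower

variable {q : ∀ n, B →⋆ₙₐ[ℂ] C n} {p : B →⋆ₙₐ[ℂ] D} {π : ∀ n, C n →⋆ₙₐ[ℂ] D}

lemma closure_iUnion_ker_q_subset (hπ : ∀ n, (π n).comp (q n) = p) :
    closure (⋃ n, {b | q n b = 0}) ⊆ {b | p b = 0} := by
  refine closure_minimal (Set.iUnion_subset fun n b (hb : q n b = 0) ↦ ?_)
    (isClosed_eq (map_continuous p) continuous_const)
  change p b = 0
  rw [← hπ n, NonUnitalStarAlgHom.comp_apply, hb, map_zero]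

lemma of_ker_p_subset (hq : ∀ n, Function.Surjective (q n)) (hp : Function.Surjective p)
    (hπ : ∀ n, (π n).comp (q n) = p) (hmono : ∀ n, {b | q n b = 0} ⊆ {b | q (n + 1) b = 0})
    (hker : {b | p b = 0} ⊆ closure (⋃ n, {b | q n b = 0})) : IsQuotientTower q p π :=
  ⟨hq, hp, hπ, hmono, hker.antisymm (closure_iUnion_ker_q_subset hπ)⟩

variable (hT : IsQuotientTower q p π)
include hT

lemma π_q_apply (n : ℕ) (b : B) : π n (q n b) = p b := DFunLike.congr_fun (hT.comp_q n) b

lemma surjective_π (n : ℕ) : Function.Surjective (π n) := fun d ↦ by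
  obtain ⟨b, rfl⟩ := hT.surjective_p d
  exact ⟨q n b, hT.π_q_apply n b⟩

lemma q_eq_zero_of_le {m n : ℕ} (hmn : m ≤ n) {b : B} (hb : q m b = 0) : q n b = 0 :=
  monotone_nat_of_le_succ (f := fun n ↦ {b | q n b = 0}) hT.ker_q_subset hmn hb

lemma tendsto_norm_q_of_p_eq_zero {b : B} (hb : p b = 0) :
    Tendsto (fun n ↦ ‖q n b‖) atTop (𝓝 0) := by
  have hb' : b ∈ closure (⋃ n, {b | q n b = 0}) := hT.ker_p_eq ▸ hb
  refine Metric.tendsto_atTop.mpr fun ε hε ↦ ?_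
  obtain ⟨w, hw, hbw⟩ := Metric.mem_closure_iff.mp hb' ε hε
  obtain ⟨m, hwm⟩ := Set.mem_iUnion.mp hw
  refine ⟨m, fun n hn ↦ ?_⟩
  calc dist ‖q n b‖ 0 = ‖q n (b - w)‖ := by
        rw [dist_zero_right, norm_norm, map_sub, hT.q_eq_zero_of_le hn hwm, sub_zero]
    _ ≤ ‖b - w‖ := NonUnitalStarAlgHom.norm_apply_le (q n) _
    _ < ε := by rwa [← dist_eq_norm]

/-- Projections lift along the tower: lift to a self-adjoint `b`, which is almost idempotent
in some `C n`, and apply the cutoff `projCutoff` there. -/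
lemma exists_isStarProjection_π_eq {h : D} (hh : IsStarProjection h) :
    ∃ n, ∃ e : C n, IsStarProjection e ∧ π n e = h := by
  obtain ⟨b₀, hb₀⟩ := hT.surjective_p h
  set b := star b₀ * b₀
  have hb : IsSelfAdjoint b := .star_mul_self b₀
  have hpb : p b = h := by
    rw [map_mul, map_star, hb₀, hh.isSelfAdjoint.star_eq, hh.isIdempotentElem.eq]
  have hsmall := hT.tendsto_norm_q_of_p_eq_zero (b := b * b - b)
    (by rw [map_sub, map_mul, hpb, hh.isIdempotentElem.eq, sub_self])
  obtain ⟨n, hn⟩ := (hsmall.eventually (gt_mem_nhds (by norm_num : (0 : ℝ) < 3 / 16))).exists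
  have hy : IsSelfAdjoint (q n b) := hb.map (q n)
  refine ⟨n, cfcₙ projCutoff (q n b),
    isStarProjection_cfcₙ_projCutoff hy (by rwa [← map_mul, ← map_sub]), ?_⟩
  rw [NonUnitalStarAlgHom.map_cfcₙ (π n) projCutoff (q n b) continuous_projCutoff.continuousOn
    projCutoff_zero (ha := hy) (hφa := hy.map (π n)), hT.π_q_apply, hpb, hh.cfcₙ_projCutoff]

lemma tail (n₀ : ℕ) {r : ∀ k, C n₀ →⋆ₙₐ[ℂ] C (k + n₀)}
    (hr : ∀ k, (r k).comp (q n₀) = q (k + n₀)) :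
    IsQuotientTower r (π n₀) (fun k ↦ π (k + n₀)) := by
  have hr' (k : ℕ) (b : B) : r k (q n₀ b) = q (k + n₀) b := DFunLike.congr_fun (hr k) b
  refine of_ker_p_subset (fun k c ↦ ?_) (hT.surjective_π n₀) (fun k ↦ ?_) (fun k c hc ↦ ?_) ?_
  · obtain ⟨b, rfl⟩ := hT.surjective_q (k + n₀) c
    exact ⟨q n₀ b, hr' k b⟩
  · ext c
    obtain ⟨b, rfl⟩ := hT.surjective_q n₀ c
    simp only [NonUnitalStarAlgHom.comp_apply, hr', π_q_apply hT]
  · obtain ⟨b, rfl⟩ := hT.surjective_q n₀ c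
    change r k (q n₀ b) = 0 at hc
    change r (k + 1) (q n₀ b) = 0
    rw [hr'] at hc ⊢
    exact hT.q_eq_zero_of_le (by omega) hc
  · rintro c (hc : π n₀ c = 0)
    obtain ⟨b, rfl⟩ := hT.surjective_q n₀ c
    have hb : b ∈ closure (⋃ m, {b | q m b = 0}) :=
      hT.ker_p_eq ▸ (hT.π_q_apply n₀ b ▸ hc : p b = 0)
    refine closure_mono ?_ (image_closure_subset_closure_image (map_continuous (q n₀)) ⟨b, hb, rfl⟩)
    rintro _ ⟨w, hw, rfl⟩
    obtain ⟨m, hwm⟩ := Set.mem_iUnion.mp hw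
    refine Set.mem_iUnion.mpr ⟨m, ?_⟩
    change r m (q n₀ w) = 0
    rw [hr']
    exact hT.q_eq_zero_of_le (Nat.le_add_right m n₀) hwm

lemma corner {e : B} (he : IsStarProjection e) :
    IsQuotientTower (fun n ↦ cornerMap (q n) he.isSelfAdjoint rfl)
      (cornerMap p he.isSelfAdjoint rfl)
      (fun n ↦ cornerMap (π n) (he.map (q n)).isSelfAdjoint (hT.π_q_apply n e)) := by
  refine of_ker_p_subset (fun n ↦ cornerMap_surjective (hT.surjective_q n) he rfl)
    (cornerMap_surjective hT.surjective_p he rfl) (fun n ↦ ?_) (fun n x hx ↦ ?_) ?_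
  · ext x
    exact hT.π_q_apply n x
  · exact Subtype.ext (hT.ker_q_subset n (congrArg Subtype.val hx))
  · intro x hx
    let E : B → _root_.corner ℂ e he.isSelfAdjoint := fun b ↦ ⟨e * b * e, he.mul_mul_mem_corner b⟩
    have hE : Continuous E := by fun_prop
    have hEx : E x = x := Subtype.ext (by simp only [E, x.2.1, x.2.2])
    have hx' : (x : B) ∈ closure (⋃ n, {b | q n b = 0}) :=
      hT.ker_p_eq ▸ congrArg Subtype.val hx
    rw [← hEx]
    refine closure_mono ?_ (image_closure_subset_closure_image hE ⟨x, hx', rfl⟩)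
    rintro _ ⟨w, hw, rfl⟩
    obtain ⟨n, hwn⟩ := Set.mem_iUnion.mp hw
    have hwn : q n w = 0 := hwn
    exact Set.mem_iUnion.mpr ⟨n, Subtype.ext (by simp [E, hwn])⟩

end IsQuotientTower

end QuotientTower

open TopologicalSpace in
theorem isWSP_unitization_of_isWSP1 (A : Type u) [NonUnitalNormedRing A] [StarRing A]
    [CStarRing A] [NormedSpace ℂ A] [IsScalarTower ℂ A A]
    [SMulCommClass ℂ A A] [StarModule ℂ A] (hA : IsWSP1.{u, v} A) :
    IsWSP.{u, v} (Unitization ℂ A) := by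
  intro B _ _ _ _ _ _ _ _ _ C _ _ _ _ _ _ _ _ D _ _ _ _ _ _ _ _ q p π hq hp hπ hmono hker φ
  let _ : NonUnitalCStarAlgebra B := {}
  let _ : ∀ n, NonUnitalCStarAlgebra (C n) := fun n ↦ {}
  let _ : NonUnitalCStarAlgebra D := {}
  have hT : IsQuotientTower q p π := ⟨hq, hp, hπ, hmono, hker⟩
  obtain ⟨n₀, e, he, hπe⟩ := hT.exists_isStarProjection_π_eq ((IsStarProjection.one _).map φ)
  choose r hr using fun k ↦ NonUnitalStarAlgHom.exists_comp_eq_of_surjective (hq n₀)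
    (q (k + n₀)) fun b ↦ hT.q_eq_zero_of_le (Nat.le_add_left n₀ k)
  have hTail := hT.tail n₀ hr
  have hCorner := hTail.corner he
  -- the base `e (C n₀) e` of the tower of corners is unital, so WSP1 applies to it
  let _ := he.cornerCStarAlgebra
  have : SeparableSpace (C n₀) := (hq n₀).denseRange.separableSpace (map_continuous (q n₀))
  have hφ (x : Unitization ℂ A) : φ x ∈ corner ℂ (π n₀ e) (he.map (π n₀)).isSelfAdjoint := by
    rw [mem_corner, hπe, ← map_mul, ← map_mul, one_mul, mul_one]
    exact ⟨rfl, rfl⟩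
  obtain ⟨ψ', hψ'⟩ := hA _ _ _ _ _ _ hCorner.surjective_q hCorner.surjective_p hCorner.comp_q
    hCorner.ker_q_subset hCorner.ker_p_eq (NonUnitalStarAlgHom.codRestrict
      (φ.comp (Unitization.inrNonUnitalStarAlgHom ℂ A)) _ fun a ↦ hφ a)
  obtain ⟨ψ, hψ⟩ := exists_pi_add_eq (F := fun n ↦ Unitization ℂ A →⋆ₙₐ[ℂ] C n) n₀ fun k ↦
    Unitization.cornerLift ((NonUnitalStarSubalgebraClass.subtype _).comp (ψ' k)) (he.map (r k))
      fun a ↦ (ψ' k a).2.1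
  refine ⟨ψ, fun x ↦ (tendsto_add_atTop_iff_nat n₀).mp ?_⟩
  rw [Unitization.map_eq_map_inr_add_smul_map_one φ x]
  refine (((continuous_subtype_val.tendsto _).comp (hψ' x.snd)).add tendsto_const_nhds).congr
    fun k ↦ ?_
  rw [hψ]
  change _ = π (k + n₀) (ψ' k x.snd + x.fst • r k e)
  rw [map_add, map_smul, hTail.π_q_apply, ← hπe]
  rfl

theorem isWSP1_of_isWSP_unitization (A : Type u) [NonUnitalNormedRing A] [StarRing A]
    [CStarRing A] [NormedSpace ℂ A] [IsScalarTower ℂ A A]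
    [SMulCommClass ℂ A A] [StarModule ℂ A] (hA : IsWSP.{u, v} (Unitization ℂ A)) :
    IsWSP1.{u, v} A := by
  intro B _ _ _ _ _ _ _ C _ _ _ _ _ _ _ _ D _ _ _ _ _ _ _ _ q p π hq hp hπ hmono hker φ
  have hunit (d : D) : p 1 * d = d := by
    obtain ⟨b, rfl⟩ := hp d
    rw [← map_mul, one_mul]
  obtain ⟨Ψ, hΨ⟩ := hA B C D q p π hq hp hπ hmono hker
    (Unitization.cornerLift φ ((IsStarProjection.one B).map p) fun a ↦ hunit (φ a))
  exact ⟨fun n ↦ (Ψ n).comp (Unitization.inrNonUnitalStarAlgHom ℂ A), fun a ↦ by simpa using hΨ a⟩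

theorem isWSP1_iff_isWSP_unitization_general
    (A : Type u) [NonUnitalNormedRing A] [StarRing A] [CStarRing A]
    [NormedSpace ℂ A] [IsScalarTower ℂ A A] [SMulCommClass ℂ A A] [StarModule ℂ A] :
    IsWSP1.{u, v} A ↔ IsWSP.{u, v} (Unitization ℂ A) :=
  ⟨isWSP_unitization_of_isWSP1 A, isWSP1_of_isWSP_unitization A⟩

/-- A separable C*-algebra `A` is WSP1 if and only if its (minimal) unitization
`Ã = Unitization ℂ A` is weakly semiprojective. -/
theorem isWSP1_iff_isWSP_unitization
    (A : Type u) [NonUnitalNormedRing A] [StarRing A] [CStarRing A] [CompleteSpace A]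
    [NormedSpace ℂ A] [IsScalarTower ℂ A A] [SMulCommClass ℂ A A] [StarModule ℂ A]
    [TopologicalSpace.SeparableSpace A] :
    IsWSP1.{u, v} A ↔ IsWSP.{u, v} (Unitization ℂ A) :=
  isWSP1_iff_isWSP_unitization_general A
end

section
/- Let A be a separable unital C*-algebra. Then A is WSP1 if and only if A is weakly semiprojective. -/
universe u v

/-!
Weak semiprojectivity trivially implies WSP1. Conversely, given a lifting problem for a
non-unital `B`, unitize `B`, `Cₙ`, `D` and all the maps: the kernels of the unitized maps are
the images of the old ones under `inr`, which is a closed embedding, so WSP1 applies to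
`inr ∘ φ`. The scalar parts of the approximate lifts `ψₙ` tend to `0`; since `A` is unital,
the scalar part of `ψₙ 1` is an idempotent scalar, hence eventually `0`, and then `ψₙ` takes
values in `Cₙ`.
-/

open Filter Topology

namespace Unitization

section StarMap

variable {R A B : Type*} [CommSemiring R] [StarRing R]
  [NonUnitalSemiring A] [StarRing A] [Module R A] [SMulCommClass R A A] [IsScalarTower R A A]
  [NonUnitalSemiring B] [StarRing B] [Module R B] [SMulCommClass R B B] [IsScalarTower R B B]
  [StarModule R B]

@[simp]
lemma fst_starMap (φ : A →⋆ₙₐ[R] B) (x : Unitization R A) : (starMap φ x).fst = x.fst := by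
  simp [algebraMap_eq_inl]

@[simp]
lemma snd_starMap (φ : A →⋆ₙₐ[R] B) (x : Unitization R A) : (starMap φ x).snd = φ x.snd := by
  simp [algebraMap_eq_inl]

lemma setOf_starMap_eq_zero (φ : A →⋆ₙₐ[R] B) :
    {x | starMap φ x = 0} = inr '' {a | φ a = 0} := by
  ext x
  constructor
  · intro hx
    have hfst : x.fst = 0 := by rw [← fst_starMap φ, hx, fst_zero]
    refine ⟨x.snd, show φ x.snd = 0 by rw [← snd_starMap, hx, snd_zero], ?_⟩
    ext <;> simp [hfst]
  · rintro ⟨a, ha : φ a = 0, rfl⟩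
    show starMap φ (inr a) = 0
    rw [starMap_inr, ha, inr_zero]

end StarMap

section Idempotent

variable {R A E F : Type*} [CommSemiring R] [AddMonoid E] [Mul E] [SMul R E] [MulOneClass A]
  [FunLike F A (Unitization R E)] [MulHomClass F A (Unitization R E)]

lemma fst_map_one_eq_zero_or_one [IsLeftCancelMulZero R] (f : F) :
    (f 1).fst = 0 ∨ (f 1).fst = 1 :=
  IsIdempotentElem.iff_eq_zero_or_one.mp <| by
    rw [IsIdempotentElem, ← fst_mul, ← map_mul, one_mul]

lemma fst_map_eq_zero_of_fst_map_one_eq_zero (f : F) (h : (f 1).fst = 0) (a : A) :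
    (f a).fst = 0 := by
  rw [← one_mul a, map_mul, fst_mul, h, zero_mul]

end Idempotent

end Unitization

section

variable {R A E : Type*} [CommSemiring R] [StarRing R]
  [NonUnitalSemiring A] [StarRing A] [Module R A]
  [NonUnitalSemiring E] [StarRing E] [Module R E] [StarModule R E]

@[simps]
def NonUnitalStarAlgHom.sndOfFstEqZero (f : A →⋆ₙₐ[R] Unitization R E)
    (hf : ∀ a, (f a).fst = 0) : A →⋆ₙₐ[R] E where
  toFun a := (f a).snd
  map_smul' c a := by simp
  map_zero' := by simp
  map_add' a b := by simp
  map_mul' a b := by simp [Unitization.snd_mul, hf]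
  map_star' a := by simp [map_star]

end

open Unitization in
theorem exists_tendsto_of_tendsto_starMap {𝕜 A D : Type*} {C : ℕ → Type*}
    [NontriviallyNormedField 𝕜] [StarRing 𝕜] [Semiring A] [StarRing A] [Module 𝕜 A]
    [∀ n, NonUnitalSemiring (C n)] [∀ n, StarRing (C n)] [∀ n, Module 𝕜 (C n)]
    [∀ n, SMulCommClass 𝕜 (C n) (C n)] [∀ n, IsScalarTower 𝕜 (C n) (C n)]
    [NonUnitalNormedRing D] [StarRing D] [NormedSpace 𝕜 D] [IsScalarTower 𝕜 D D]
    [SMulCommClass 𝕜 D D] [StarModule 𝕜 D] [RegularNormedAlgebra 𝕜 D]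
    (π : ∀ n, C n →⋆ₙₐ[𝕜] D) (φ : A →⋆ₙₐ[𝕜] D) (ψ : ∀ n, A →⋆ₙₐ[𝕜] Unitization 𝕜 (C n))
    (hψ : ∀ a, Tendsto (fun n ↦ starMap (π n) (ψ n a)) atTop (𝓝 (inr (φ a)))) :
    ∃ ψ₀ : ∀ n, A →⋆ₙₐ[𝕜] C n, ∀ a, Tendsto (fun n ↦ π n (ψ₀ n a)) atTop (𝓝 (φ a)) := by
  have hfst : ∀ a, Tendsto (fun n ↦ (ψ n a).fst) atTop (𝓝 0) := fun a ↦ by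
    simpa only [Function.comp_def, fst_starMap, fst_inr] using
      (Unitization.continuous_fst.tendsto _).comp (hψ a)
  have hsnd : ∀ a, Tendsto (fun n ↦ π n (ψ n a).snd) atTop (𝓝 (φ a)) := fun a ↦ by
    simpa only [Function.comp_def, snd_starMap, snd_inr] using
      (Unitization.continuous_snd.tendsto _).comp (hψ a)
  have hev : ∀ᶠ n in atTop, ∀ a, (ψ n a).fst = 0 := by
    filter_upwards [(hfst 1).eventually_ne zero_ne_one] with n hn
    exact fst_map_eq_zero_of_fst_map_one_eq_zero (ψ n)
      ((fst_map_one_eq_zero_or_one (ψ n)).resolve_right hn)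
  classical
  refine ⟨fun n ↦ if h : ∀ a, (ψ n a).fst = 0 then (ψ n).sndOfFstEqZero h else 0,
    fun a ↦ (hsnd a).congr' ?_⟩
  filter_upwards [hev] with n hn
  simp [dif_pos hn]

instance Unitization.instSeparableSpace {𝕜 A : Type*} [NontriviallyNormedField 𝕜]
    [NonUnitalNormedRing A] [NormedSpace 𝕜 A] [IsScalarTower 𝕜 A A] [SMulCommClass 𝕜 A A]
    [RegularNormedAlgebra 𝕜 A] [TopologicalSpace.SeparableSpace 𝕜]
    [TopologicalSpace.SeparableSpace A] : TopologicalSpace.SeparableSpace (Unitization 𝕜 A) :=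
  Unitization.uniformEquivProd.symm.toHomeomorph.isQuotientMap.separableSpace

open Unitization in
theorem isWSP1_iff_isWSP_of_unital_general
    (A : Type u) [NormedRing A] [StarRing A]
    [NormedAlgebra ℂ A] [StarModule ℂ A] :
    IsWSP1.{u, v} A ↔ IsWSP.{u, v} A := by
  refine ⟨fun h ↦ ?_, fun h B _ _ _ _ _ _ _ ↦ h B⟩
  intro B _ _ _ _ _ _ _ _ _ C _ _ _ _ _ _ _ _ D _ _ _ _ _ _ _ _ q p π hq hp hπ hmono hker φ
  obtain ⟨ψ, hψ⟩ := h (Unitization ℂ B) (fun n ↦ Unitization ℂ (C n)) (Unitization ℂ D)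
    (fun n ↦ starMap (q n)) (starMap p) (fun n ↦ starMap (π n))
    (fun n ↦ starMap_surjective (hq n)) (starMap_surjective hp)
    (fun n ↦ by rw [← hπ n, starMap_comp]; rfl)
    (fun n ↦ by
      simpa only [NonUnitalStarAlgHom.coe_coe, setOf_starMap_eq_zero] using
        Set.image_mono (hmono n))
    (by
      simp only [NonUnitalStarAlgHom.coe_coe, setOf_starMap_eq_zero]
      rw [hker, ← Set.image_iUnion, isometry_inr.isClosedEmbedding.closure_image_eq])
    ((inrNonUnitalStarAlgHom ℂ D).comp φ)
  exact exists_tendsto_of_tendsto_starMap π φ ψ hψ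

/-- Let `A` be a separable unital C*-algebra.  Then `A` is WSP1 if and only if `A` is
weakly semiprojective. -/
theorem isWSP1_iff_isWSP_of_unital
    (A : Type u) [NormedRing A] [StarRing A] [CStarRing A] [CompleteSpace A]
    [NormedAlgebra ℂ A] [StarModule ℂ A] [TopologicalSpace.SeparableSpace A] :
    IsWSP1.{u, v} A ↔ IsWSP.{u, v} A :=
  isWSP1_iff_isWSP_of_unital_general A
end
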